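/- arXiv:1706.06770 — 3 statements merged into one kernel-verified Lean document; each statement's English description precedes it below -/
import Mathlib

section
/- Let 𝒪 be an algebra of observables on a nonempty set Ω and let E : 𝒪^∞ → ℝ be a quasi-additive expectation, i.e. E is quasi-linear (linear on each 𝒜_X, X ∈ 𝒪^∞), positive (X ≥ 0 pointwise implies E[X] ≥ 0), and normalized (E[1] = 1). Then there exists a unique quasi-additive probability P on the observable sets ℰ such that P(U) = sup{E[X] : X ∈ 𝒪^∞, X ⪯ U} for every co-zero set U; that is, P : ℰ → ℝ satisfies: (I) P(A ∪ B) = P(A) + P(B) whenever A, B ∈ ℰ are disjoint with A ∪ B ∈ ℰ; (II) P(A) ≥ 0 for all A ∈ ℰ; (III) P(Ω) = 1; and (IV') P(U) = sup{P(F) : F a zero set, F ⊆ U} for every co-zero set U. -/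
open Filter MeasureTheory Topology

variable {Ω : Type*}

/-- A family `𝒪` of real functions on `Ω` is an algebra of observables: for every `n ≥ 1`,
all `X₁, …, Xₙ ∈ 𝒪` and every `φ` continuous on the image of `(X₁, …, Xₙ)`,
the composite `ω ↦ φ (X₁ ω, …, Xₙ ω)` belongs to `𝒪`. -/
def IsObsAlg (o : Set (Ω → ℝ)) : Prop :=
  ∀ n : ℕ, 0 < n → ∀ X : Fin n → Ω → ℝ, (∀ i, X i ∈ o) →
    ∀ φ : (Fin n → ℝ) → ℝ,
      ContinuousOn φ (Set.range fun ω => fun i => X i ω) →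
      (fun ω => φ fun i => X i ω) ∈ o

/-- `F ⊆ Ω` is a zero set if `F = X⁻¹({0})` for some `X ∈ 𝒪`. -/
def IsZeroSet (o : Set (Ω → ℝ)) (F : Set Ω) : Prop :=
  ∃ X ∈ o, F = X ⁻¹' {0}

/-- A co-zero set is the complement of a zero set. -/
def IsCozeroSet (o : Set (Ω → ℝ)) (U : Set Ω) : Prop :=
  IsZeroSet o Uᶜ

/-- The observable sets are the zero sets together with the co-zero sets. -/
def IsObsSet (o : Set (Ω → ℝ)) (A : Set Ω) : Prop :=
  IsZeroSet o A ∨ IsCozeroSet o A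

/-- An observable probability: additive on disjoint observable sets with observable union,
nonnegative on observable sets, normalized, with monotone convergence along increasing
sequences of co-zero sets whose union is a co-zero set. -/
def IsObsProb (o : Set (Ω → ℝ)) (P : Set Ω → ℝ) : Prop :=
  (∀ A B : Set Ω, IsObsSet o A → IsObsSet o B → Disjoint A B →
    IsObsSet o (A ∪ B) → P (A ∪ B) = P A + P B) ∧
  (∀ A : Set Ω, IsObsSet o A → 0 ≤ P A) ∧
  (P Set.univ = 1) ∧
  (∀ (U : ℕ → Set Ω) (V : Set Ω), (∀ i, IsCozeroSet o (U i)) → Monotone U →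
    IsCozeroSet o V → (⋃ i, U i) = V →
    Tendsto (fun i => P (U i)) atTop (𝓝 (P V)))

/-- `μ` is the distribution of `X` under `P`: a Borel probability measure on `ℝ` with
`μ U = P (X ⁻¹' U)` for every open `U ⊆ ℝ`. -/
def IsDistribution (o : Set (Ω → ℝ)) (P : Set Ω → ℝ) (X : Ω → ℝ)
    (μ : Measure ℝ) : Prop :=
  IsProbabilityMeasure μ ∧
  ∀ U : Set ℝ, IsOpen U → μ U = ENNReal.ofReal (P (X ⁻¹' U))

/-- Membership in `𝒪^∞`: a bounded member of `𝒪`. -/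
def MemBdd (o : Set (Ω → ℝ)) (X : Ω → ℝ) : Prop :=
  X ∈ o ∧ ∃ M : ℝ, ∀ ω, |X ω| ≤ M

/-- The closed algebra `𝒜_X` generated by `X`: all `φ ∘ X` with `φ : ℝ → ℝ` continuous
(equivalent, by Tietze extension, to continuous functions on the closure of the image). -/
def ClosedAlg (X : Ω → ℝ) : Set (Ω → ℝ) :=
  {Y | ∃ φ : ℝ → ℝ, Continuous φ ∧ Y = φ ∘ X}

/-- Positivity of a functional on `𝒪^∞`. -/
def PositiveFunc (o : Set (Ω → ℝ)) (E : (Ω → ℝ) → ℝ) : Prop :=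
  ∀ X, MemBdd o X → (∀ ω, 0 ≤ X ω) → 0 ≤ E X

/-- Quasi-linearity: `E` is linear on each `𝒜_X`, `X ∈ 𝒪^∞`. -/
def QuasiLinear (o : Set (Ω → ℝ)) (E : (Ω → ℝ) → ℝ) : Prop :=
  ∀ X, MemBdd o X → ∀ Y ∈ ClosedAlg X, ∀ Z ∈ ClosedAlg X, ∀ a b : ℝ,
    E (fun ω => a * Y ω + b * Z ω) = a * E Y + b * E Z

/-- `X ⪯ U` : there is a zero set `F` with `X ≤ 1_F` pointwise and `F ⊆ U`. -/
def PrecU (o : Set (Ω → ℝ)) (X : Ω → ℝ) (U : Set Ω) : Prop :=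
  ∃ F : Set Ω, IsZeroSet o F ∧ (∀ ω, X ω ≤ F.indicator (fun _ => (1:ℝ)) ω) ∧ F ⊆ U

/-- An observable expectation: quasi-linear, positive, normalized, with monotone
convergence along increasing sequences in `𝒪^∞` converging pointwise in `𝒪^∞`. -/
def IsObsExp (o : Set (Ω → ℝ)) (E : (Ω → ℝ) → ℝ) : Prop :=
  QuasiLinear o E ∧ PositiveFunc o E ∧ E (fun _ => 1) = 1 ∧
  (∀ (X : ℕ → Ω → ℝ) (Y : Ω → ℝ), (∀ n, MemBdd o (X n)) → MemBdd o Y →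
    (∀ n ω, X n ω ≤ X (n+1) ω) →
    (∀ ω, Tendsto (fun n => X n ω) atTop (𝓝 (Y ω))) →
    Tendsto (fun n => E (X n)) atTop (𝓝 (E Y)))

/-- A quasi-additive probability: axioms (I)-(III) of an observable probability
together with inner regularity (IV'): `P U = sup {P F : F zero set, F ⊆ U}`. -/
def IsQuasiAddProb (o : Set (Ω → ℝ)) (P : Set Ω → ℝ) : Prop :=
  (∀ A B : Set Ω, IsObsSet o A → IsObsSet o B → Disjoint A B →
    IsObsSet o (A ∪ B) → P (A ∪ B) = P A + P B) ∧
  (∀ A : Set Ω, IsObsSet o A → 0 ≤ P A) ∧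
  (P Set.univ = 1) ∧
  (∀ U : Set Ω, IsCozeroSet o U →
    P U = sSup {r | ∃ F : Set Ω, IsZeroSet o F ∧ F ⊆ U ∧ r = P F})

namespace QAED

variable {Ω : Type*}

section tools

variable {o : Set (Ω → ℝ)} {E : (Ω → ℝ) → ℝ}

lemma mem1 (hO : IsObsAlg o) {X : Ω → ℝ} (hX : X ∈ o) (φ : ℝ → ℝ) (hφ : Continuous φ) :
    (fun ω => φ (X ω)) ∈ o := by
  have := hO 1 one_pos (fun _ => X) (fun _ => hX) (fun p => φ (p 0))
    ((hφ.comp (continuous_apply 0)).continuousOn)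
  simpa using this

lemma mem2 (hO : IsObsAlg o) {X Y : Ω → ℝ} (hX : X ∈ o) (hY : Y ∈ o) (φ : ℝ → ℝ → ℝ)
    (hφ : ∀ ω, ContinuousAt (fun p : ℝ × ℝ => φ p.1 p.2) (X ω, Y ω)) :
    (fun ω => φ (X ω) (Y ω)) ∈ o := by
  have key := hO 2 (by norm_num) ![X, Y] (fun i => by fin_cases i <;> simpa)
    (fun p => φ (p 0) (p 1)) ?_
  · simpa using key
  · rintro p ⟨ω, rfl⟩
    apply ContinuousAt.continuousWithinAt
    have h2 : ContinuousAt (fun q : Fin 2 → ℝ => ((q 0 : ℝ), (q 1 : ℝ)))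
        (fun i => ![X, Y] i ω) := ((continuous_apply 0).prodMk (continuous_apply 1)).continuousAt
    have h4 : ContinuousAt (fun p : ℝ × ℝ => φ p.1 p.2)
        ((fun q : Fin 2 → ℝ => ((q 0 : ℝ), (q 1 : ℝ))) (fun i => ![X, Y] i ω)) := by
      simpa using hφ ω
    exact (ContinuousAt.comp (g := fun p : ℝ × ℝ => φ p.1 p.2)
      (f := fun q : Fin 2 → ℝ => ((q 0 : ℝ), (q 1 : ℝ)))
      (x := fun i => ![X, Y] i ω) h4 h2)

lemma bnd1 {X : Ω → ℝ} (hb : ∃ M, ∀ ω, |X ω| ≤ M) {φ : ℝ → ℝ} (hφ : Continuous φ) :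
    ∃ M, ∀ ω, |φ (X ω)| ≤ M := by
  obtain ⟨M, hM⟩ := hb
  obtain ⟨C, hC⟩ := (isCompact_Icc (a := -M) (b := M)).exists_bound_of_continuousOn
    hφ.continuousOn
  refine ⟨C, fun ω => ?_⟩
  have := hC (X ω) (by simpa [Set.mem_Icc] using abs_le.mp (hM ω))
  simpa using this

lemma membdd1 (hO : IsObsAlg o) {X : Ω → ℝ} (hX : MemBdd o X) (φ : ℝ → ℝ) (hφ : Continuous φ) :
    MemBdd o (fun ω => φ (X ω)) :=
  ⟨mem1 hO hX.1 φ hφ, bnd1 hX.2 hφ⟩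

lemma lin2 (hql : QuasiLinear o E) {h : Ω → ℝ} (hh : MemBdd o h) (φ ψ : ℝ → ℝ)
    (hφ : Continuous φ) (hψ : Continuous ψ) (a b : ℝ) :
    E (fun ω => a * φ (h ω) + b * ψ (h ω)) =
      a * E (fun ω => φ (h ω)) + b * E (fun ω => ψ (h ω)) :=
  hql h hh _ ⟨φ, hφ, rfl⟩ _ ⟨ψ, hψ, rfl⟩ a b

lemma econst (hql : QuasiLinear o E) (hnorm : E (fun _ => 1) = 1)
    (h1 : (fun _ : Ω => (1:ℝ)) ∈ o) (c : ℝ) : E (fun _ => c) = c := by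
  have hb : MemBdd o (fun _ : Ω => (1:ℝ)) := ⟨h1, 1, fun ω => by norm_num⟩
  have := lin2 hql hb (fun _ => 1) (fun _ => 1) continuous_const continuous_const c 0
  have e1 : (fun ω : Ω => c * (fun _ : ℝ => (1:ℝ)) ((fun _ : Ω => (1:ℝ)) ω)
      + 0 * (fun _ : ℝ => (1:ℝ)) ((fun _ : Ω => (1:ℝ)) ω)) = (fun _ : Ω => c) := by
    funext ω; ring
  rw [e1] at this
  simpa [hnorm] using this

lemma emono (hO : IsObsAlg o) (hql : QuasiLinear o E) (hpos : PositiveFunc o E)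
    {h : Ω → ℝ} (hh : MemBdd o h) {φ ψ : ℝ → ℝ} (hφ : Continuous φ) (hψ : Continuous ψ)
    (hle : ∀ ω, φ (h ω) ≤ ψ (h ω)) :
    E (fun ω => φ (h ω)) ≤ E (fun ω => ψ (h ω)) := by
  have hlin := lin2 hql hh ψ φ hψ hφ 1 (-1)
  have e1 : (fun ω => 1 * ψ (h ω) + (-1) * φ (h ω)) = (fun ω => (fun t => ψ t - φ t) (h ω)) := by
    funext ω; ring
  rw [e1] at hlin
  have hmb : MemBdd o (fun ω => (fun t => ψ t - φ t) (h ω)) :=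
    membdd1 hO hh _ (hψ.sub hφ)
  have hge : 0 ≤ E (fun ω => (fun t => ψ t - φ t) (h ω)) :=
    hpos _ hmb (fun ω => by simpa using sub_nonneg.mpr (hle ω))
  linarith

lemma ele1 (hO : IsObsAlg o) (hql : QuasiLinear o E) (hpos : PositiveFunc o E)
    (hnorm : E (fun _ => 1) = 1) {X : Ω → ℝ} (hX : MemBdd o X) (hle : ∀ ω, X ω ≤ 1) :
    E X ≤ 1 := by
  have := emono hO hql hpos hX (φ := fun t => t) (ψ := fun _ => 1)
    continuous_id continuous_const hle
  simpa [hnorm] using this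

lemma ele0 (hO : IsObsAlg o) (hql : QuasiLinear o E) (hpos : PositiveFunc o E)
    (hnorm : E (fun _ => 1) = 1) (h1 : (fun _ : Ω => (1:ℝ)) ∈ o)
    {X : Ω → ℝ} (hX : MemBdd o X) (hle : ∀ ω, X ω ≤ 0) :
    E X ≤ 0 := by
  have := emono hO hql hpos hX (φ := fun t => t) (ψ := fun _ => 0)
    continuous_id continuous_const hle
  simpa [econst hql hnorm h1 0] using this

/-- Key lemma (L-shape): if `X` is supported where `Y = 1`, then `E X ≤ E Y`. -/
lemma kl (hO : IsObsAlg o) (hql : QuasiLinear o E) (hpos : PositiveFunc o E)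
    {X Y : Ω → ℝ} (hX : MemBdd o X) (hY : MemBdd o Y)
    (hX0 : ∀ ω, 0 ≤ X ω) (hX1 : ∀ ω, X ω ≤ 1)
    (hY0 : ∀ ω, 0 ≤ Y ω) (hY1 : ∀ ω, Y ω ≤ 1)
    (hsupp : ∀ ω, Y ω ≠ 1 → X ω = 0) : E X ≤ E Y := by
  set h : Ω → ℝ := fun ω => X ω + Y ω with hh
  have hmb : MemBdd o h := by
    refine ⟨mem2 hO hX.1 hY.1 (fun x y => x + y) (fun ω => by fun_prop), ?_⟩
    exact ⟨2, fun ω => by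
      have := hX0 ω; have := hX1 ω; have := hY0 ω; have := hY1 ω
      rw [hh]; rw [abs_le]; constructor <;> simp <;> linarith⟩
  have e1 : (fun ω => (fun t => max (t - 1) 0) (h ω)) = X := by
    funext ω
    rcases eq_or_ne (Y ω) 1 with hy | hy
    · simp only [hh, hy]
      rw [max_eq_left (by linarith [hX0 ω])]
      ring
    · have hx := hsupp ω hy
      simp only [hh, hx]
      rw [max_eq_right (by linarith [hY1 ω])]
  have e2 : (fun ω => (fun t => min t 1) (h ω)) = Y := by
    funext ω
    rcases eq_or_ne (Y ω) 1 with hy | hy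
    · simp only [hh, hy]
      rw [min_eq_right (by linarith [hX0 ω])]
    · have hx := hsupp ω hy
      simp only [hh, hx, zero_add]
      exact min_eq_left (hY1 ω)
  have hple : ∀ ω, (fun t : ℝ => max (t - 1) 0) (h ω) ≤ (fun t : ℝ => min t 1) (h ω) := by
    intro ω
    have e1' : (fun t : ℝ => max (t - 1) 0) (h ω) = X ω := congrFun e1 ω
    have e2' : (fun t : ℝ => min t 1) (h ω) = Y ω := congrFun e2 ω
    rw [e1', e2']
    rcases eq_or_ne (Y ω) 1 with hy | hy
    · rw [hy]; exact hX1 ω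
    · rw [hsupp ω hy]; exact hY0 ω
  have hmono := emono hO hql hpos hmb (φ := fun t => max (t - 1) 0) (ψ := fun t => min t 1)
    (by fun_prop) (by fun_prop) hple
  rw [e1, e2] at hmono
  exact hmono

/-- orthogonal additivity -/
lemma oa (hO : IsObsAlg o) (hql : QuasiLinear o E)
    {X Y : Ω → ℝ} (hX : MemBdd o X) (hY : MemBdd o Y)
    (hX0 : ∀ ω, 0 ≤ X ω) (hY0 : ∀ ω, 0 ≤ Y ω)
    (horth : ∀ ω, X ω = 0 ∨ Y ω = 0) :
    E (fun ω => X ω + Y ω) = E X + E Y := by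
  set h : Ω → ℝ := fun ω => X ω - Y ω with hh
  obtain ⟨Mx, hMx⟩ := hX.2
  obtain ⟨My, hMy⟩ := hY.2
  have hmb : MemBdd o h := by
    refine ⟨mem2 hO hX.1 hY.1 (fun x y => x - y) (fun ω => by fun_prop), Mx + My, fun ω => ?_⟩
    have := hMx ω; have := hMy ω
    rw [hh]
    calc |X ω - Y ω| ≤ |X ω| + |Y ω| := abs_sub _ _
      _ ≤ Mx + My := by linarith
  have e1 : (fun ω => (fun t => max t 0) (h ω)) = X := by
    funext ω
    rcases horth ω with hx | hy
    · simp only [hh, hx, zero_sub]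
      rw [max_eq_right (by linarith [hY0 ω])]
    · simp only [hh, hy, sub_zero]
      exact max_eq_left (hX0 ω)
  have e2 : (fun ω => (fun t => max (-t) 0) (h ω)) = Y := by
    funext ω
    rcases horth ω with hx | hy
    · simp only [hh, hx, zero_sub, neg_neg]
      exact max_eq_left (hY0 ω)
    · simp only [hh, hy, sub_zero]
      rw [max_eq_right (by linarith [hX0 ω])]
  have hlin := lin2 hql hmb (fun t => max t 0) (fun t => max (-t) 0)
    (by fun_prop) (by fun_prop) 1 1
  rw [e1, e2] at hlin
  have e3 : (fun ω => 1 * max (h ω) 0 + 1 * max (-h ω) 0) = (fun ω => X ω + Y ω) := by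
    funext ω
    have e1' := congrFun e1 ω
    have e2' := congrFun e2 ω
    simp only at e1' e2'
    rw [one_mul, one_mul, e1', e2']
  rw [e3] at hlin
  simpa using hlin

end tools
section sets

variable {o : Set (Ω → ℝ)} {E : (Ω → ℝ) → ℝ}

lemma mkZero {u : Ω → ℝ} (hu : u ∈ o) : IsZeroSet o {ω | u ω = 0} :=
  ⟨u, hu, by ext ω; simp⟩

/-- canonical representation of a zero set -/
lemma zc (hO : IsObsAlg o) {F : Set Ω} (h : IsZeroSet o F) :
    ∃ u : Ω → ℝ, u ∈ o ∧ MemBdd o u ∧ (∀ ω, 0 ≤ u ω ∧ u ω ≤ 1) ∧ ∀ ω, (ω ∈ F ↔ u ω = 0) := by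
  obtain ⟨X, hX, hF⟩ := h
  have hmem : (fun ω => min |X ω| 1) ∈ o :=
    mem1 hO hX (fun t => min |t| 1) (by fun_prop)
  refine ⟨fun ω => min |X ω| 1, hmem,
    ⟨hmem, 1, fun ω => by
      rw [abs_le]
      constructor
      · have := abs_nonneg (X ω); have : (0:ℝ) ≤ min |X ω| 1 := le_min (abs_nonneg _) one_pos.le
        linarith
      · exact min_le_right _ _⟩,
    fun ω => ⟨le_min (abs_nonneg _) one_pos.le, min_le_right _ _⟩, fun ω => ?_⟩
  subst hF
  simp only [Set.mem_preimage, Set.mem_singleton_iff]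
  constructor
  · intro h0; simp [h0]
  · intro h0
    rcases le_total |X ω| 1 with h1 | h1
    · rw [min_eq_left h1] at h0; exact abs_eq_zero.mp h0
    · rw [min_eq_right h1] at h0; norm_num at h0

lemma zero_empty (hO : IsObsAlg o) (h1 : (fun _ : Ω => (1:ℝ)) ∈ o) :
    IsZeroSet o (∅ : Set Ω) :=
  ⟨fun _ => 1, h1, by ext ω; simp⟩

lemma zero_univ (hO : IsObsAlg o) (h1 : (fun _ : Ω => (1:ℝ)) ∈ o) :
    IsZeroSet o (Set.univ : Set Ω) :=
  ⟨fun _ => 0, mem1 hO h1 (fun _ => 0) continuous_const, by ext ω; simp⟩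

lemma zero_inter (hO : IsObsAlg o) {A B : Set Ω} (hA : IsZeroSet o A) (hB : IsZeroSet o B) :
    IsZeroSet o (A ∩ B) := by
  obtain ⟨u, hu, _, hu01, hcu⟩ := zc hO hA
  obtain ⟨v, hv, _, hv01, hcv⟩ := zc hO hB
  have : IsZeroSet o {ω | u ω + v ω = 0} :=
    mkZero (mem2 hO hu hv (fun x y => x + y) (fun ω => by fun_prop))
  convert this using 1
  ext ω
  simp only [Set.mem_inter_iff, hcu ω, hcv ω, Set.mem_setOf_eq]
  constructor
  · rintro ⟨h1, h2⟩; rw [h1, h2]; ring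
  · intro h
    have := (hu01 ω).1; have := (hv01 ω).1
    constructor <;> linarith

lemma zero_union (hO : IsObsAlg o) {A B : Set Ω} (hA : IsZeroSet o A) (hB : IsZeroSet o B) :
    IsZeroSet o (A ∪ B) := by
  obtain ⟨u, hu, _, hu01, hcu⟩ := zc hO hA
  obtain ⟨v, hv, _, hv01, hcv⟩ := zc hO hB
  have : IsZeroSet o {ω | u ω * v ω = 0} :=
    mkZero (mem2 hO hu hv (fun x y => x * y) (fun ω => by fun_prop))
  convert this using 1
  ext ω
  simp only [Set.mem_union, hcu ω, hcv ω, Set.mem_setOf_eq, mul_eq_zero]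

lemma cozero_union (hO : IsObsAlg o) {A B : Set Ω} (hA : IsCozeroSet o A)
    (hB : IsCozeroSet o B) : IsCozeroSet o (A ∪ B) := by
  unfold IsCozeroSet at *
  rw [Set.compl_union]
  exact zero_inter hO hA hB

lemma cozero_inter (hO : IsObsAlg o) {A B : Set Ω} (hA : IsCozeroSet o A)
    (hB : IsCozeroSet o B) : IsCozeroSet o (A ∩ B) := by
  unfold IsCozeroSet at *
  rw [Set.compl_inter]
  exact zero_union hO hA hB

lemma cozero_univ (hO : IsObsAlg o) (h1 : (fun _ : Ω => (1:ℝ)) ∈ o) :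
    IsCozeroSet o (Set.univ : Set Ω) := by
  unfold IsCozeroSet
  rw [Set.compl_univ]
  exact zero_empty hO h1

lemma cozero_empty (hO : IsObsAlg o) (h1 : (fun _ : Ω => (1:ℝ)) ∈ o) :
    IsCozeroSet o (∅ : Set Ω) := by
  unfold IsCozeroSet
  rw [Set.compl_empty]
  exact zero_univ hO h1

/-- The value set of the sup defining `P` on co-zero sets. -/
def Sset (o : Set (Ω → ℝ)) (E : (Ω → ℝ) → ℝ) (U : Set Ω) : Set ℝ :=
  {r | ∃ X : Ω → ℝ, MemBdd o X ∧ PrecU o X U ∧ r = E X}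

/-- The candidate value of `P` on a co-zero set. -/
noncomputable def Sv (o : Set (Ω → ℝ)) (E : (Ω → ℝ) → ℝ) (U : Set Ω) : ℝ :=
  sSup (Sset o E U)

/-- A nice admissible pair for `U`. -/
def Adm (o : Set (Ω → ℝ)) (U : Set Ω) (X u : Ω → ℝ) : Prop :=
  MemBdd o X ∧ MemBdd o u ∧ (∀ ω, 0 ≤ X ω ∧ X ω ≤ 1) ∧ (∀ ω, 0 ≤ u ω) ∧
  (∀ ω, u ω = 0 → ω ∈ U) ∧ (∀ ω, u ω ≠ 0 → X ω = 0)

lemma adm_mem {U : Set Ω} {X u : Ω → ℝ} (h : Adm o U X u) : E X ∈ Sset o E U := by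
  obtain ⟨hX, hu, hX01, hu0, huU, husupp⟩ := h
  refine ⟨X, hX, ⟨{ω | u ω = 0}, mkZero hu.1, fun ω => ?_, fun ω hω => huU ω hω⟩, rfl⟩
  by_cases hω : ω ∈ {ω | u ω = 0}
  · rw [Set.indicator_of_mem hω]; exact (hX01 ω).2
  · rw [Set.indicator_of_notMem hω]
    rw [husupp ω (by simpa using hω)]

lemma sset_bdd (hO : IsObsAlg o) (hql : QuasiLinear o E) (hpos : PositiveFunc o E)
    (hnorm : E (fun _ => 1) = 1) {U : Set Ω} : ∀ r ∈ Sset o E U, r ≤ 1 := by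
  rintro r ⟨X, hX, ⟨F, hF, hind, hFU⟩, rfl⟩
  refine ele1 hO hql hpos hnorm hX (fun ω => ?_)
  refine le_trans (hind ω) ?_
  by_cases hω : ω ∈ F
  · rw [Set.indicator_of_mem hω]
  · rw [Set.indicator_of_notMem hω]; norm_num

lemma sset_bddAbove (hO : IsObsAlg o) (hql : QuasiLinear o E) (hpos : PositiveFunc o E)
    (hnorm : E (fun _ => 1) = 1) {U : Set Ω} : BddAbove (Sset o E U) :=
  ⟨1, fun r hr => sset_bdd hO hql hpos hnorm r hr⟩

lemma sset_zero_mem (hO : IsObsAlg o) (hql : QuasiLinear o E)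
    (hnorm : E (fun _ => 1) = 1) (h1 : (fun _ : Ω => (1:ℝ)) ∈ o) {U : Set Ω} :
    (0:ℝ) ∈ Sset o E U := by
  refine ⟨fun _ => 0, ⟨mem1 hO h1 (fun _ => 0) continuous_const, 0, fun ω => by norm_num⟩,
    ⟨∅, zero_empty hO h1, fun ω => ?_, Set.empty_subset U⟩, (econst hql hnorm h1 0).symm⟩
  rw [Set.indicator_of_notMem (Set.notMem_empty ω)]

lemma Sv_nonneg (hO : IsObsAlg o) (hql : QuasiLinear o E) (hpos : PositiveFunc o E)
    (hnorm : E (fun _ => 1) = 1) (h1 : (fun _ : Ω => (1:ℝ)) ∈ o) (U : Set Ω) :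
    0 ≤ Sv o E U :=
  le_csSup (sset_bddAbove hO hql hpos hnorm) (sset_zero_mem hO hql hnorm h1)

lemma Sv_le_one (hO : IsObsAlg o) (hql : QuasiLinear o E) (hpos : PositiveFunc o E)
    (hnorm : E (fun _ => 1) = 1) (U : Set Ω) : Sv o E U ≤ 1 :=
  Real.sSup_le (sset_bdd hO hql hpos hnorm) zero_le_one

lemma EX_le_Sv (hO : IsObsAlg o) (hql : QuasiLinear o E) (hpos : PositiveFunc o E)
    (hnorm : E (fun _ => 1) = 1) {U : Set Ω} {X u : Ω → ℝ} (h : Adm o U X u) :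
    E X ≤ Sv o E U :=
  le_csSup (sset_bddAbove hO hql hpos hnorm) (adm_mem h)

/-- every element of `Sset` is dominated by the value of a nice admissible pair -/
lemma sset_elim (hO : IsObsAlg o) (hql : QuasiLinear o E) (hpos : PositiveFunc o E)
    {U : Set Ω} {r : ℝ} (hr : r ∈ Sset o E U) :
    ∃ X u, Adm o U X u ∧ r ≤ E X := by
  obtain ⟨X0, hX0, ⟨F, hF, hind, hFU⟩, rfl⟩ := hr
  obtain ⟨u, hu, hub, hu01, hcu⟩ := zc hO hF
  have hle1 : ∀ ω, X0 ω ≤ 1 := by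
    intro ω
    refine le_trans (hind ω) ?_
    by_cases hω : ω ∈ F
    · rw [Set.indicator_of_mem hω]
    · rw [Set.indicator_of_notMem hω]; norm_num
  have hoff : ∀ ω, ω ∉ F → X0 ω ≤ 0 := by
    intro ω hω
    have := hind ω
    rwa [Set.indicator_of_notMem hω] at this
  refine ⟨fun ω => max (X0 ω) 0, u, ⟨membdd1 hO hX0 (fun t => max t 0) (by fun_prop), hub,
    fun ω => ⟨le_max_right _ _, max_le (hle1 ω) zero_le_one⟩,
    fun ω => (hu01 ω).1, fun ω hω => hFU ((hcu ω).mpr hω),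
    fun ω hω => ?_⟩, ?_⟩
  · have hnF : ω ∉ F := fun hmem => hω ((hcu ω).mp hmem)
    exact max_eq_right (hoff ω hnF)
  · exact emono hO hql hpos hX0 (φ := fun t => t) (ψ := fun t => max t 0)
      continuous_id (by fun_prop) (fun ω => le_max_left _ _)

lemma Sv_le_of_adm (hO : IsObsAlg o) (hql : QuasiLinear o E) (hpos : PositiveFunc o E)
    {U : Set Ω} {c : ℝ} (hc : 0 ≤ c) (h : ∀ X u, Adm o U X u → E X ≤ c) :
    Sv o E U ≤ c := by
  refine Real.sSup_le (fun r hr => ?_) hc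
  obtain ⟨X, u, ha, hle⟩ := sset_elim hO hql hpos hr
  exact le_trans hle (h X u ha)

lemma Sv_empty (hO : IsObsAlg o) (hql : QuasiLinear o E) (hpos : PositiveFunc o E)
    (hnorm : E (fun _ => 1) = 1) (h1 : (fun _ : Ω => (1:ℝ)) ∈ o) :
    Sv o E (∅ : Set Ω) = 0 := by
  refine le_antisymm ?_ (Sv_nonneg hO hql hpos hnorm h1 _)
  refine Sv_le_of_adm hO hql hpos le_rfl (fun X u ha => ?_)
  obtain ⟨hX, hu, hX01, hu0, huU, husupp⟩ := ha
  refine ele0 hO hql hpos hnorm h1 hX (fun ω => ?_)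
  by_cases hω : u ω = 0
  · exact absurd (huU ω hω) (Set.notMem_empty ω)
  · rw [husupp ω hω]

lemma Sv_univ (hO : IsObsAlg o) (hql : QuasiLinear o E) (hpos : PositiveFunc o E)
    (hnorm : E (fun _ => 1) = 1) (h1 : (fun _ : Ω => (1:ℝ)) ∈ o) :
    Sv o E (Set.univ : Set Ω) = 1 := by
  refine le_antisymm (Sv_le_one hO hql hpos hnorm _) ?_
  have hmem : (1:ℝ) ∈ Sset o E (Set.univ : Set Ω) := by
    refine ⟨fun _ => 1, ⟨h1, 1, fun ω => by norm_num⟩,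
      ⟨Set.univ, zero_univ hO h1, fun ω => ?_, le_rfl⟩, hnorm.symm⟩
    rw [Set.indicator_of_mem (Set.mem_univ ω)]
  exact le_csSup (sset_bddAbove hO hql hpos hnorm) hmem

end sets
section ident

variable {o : Set (Ω → ℝ)} {E : (Ω → ℝ) → ℝ}

lemma ratio_nonneg {x y : ℝ} (hx : 0 ≤ x) (hy : 0 ≤ y) : 0 ≤ x / (x + y) :=
  div_nonneg hx (by linarith)

lemma ratio_le_one {x y : ℝ} (hx : 0 ≤ x) (hy : 0 ≤ y) (hxy : x + y ≠ 0) : x / (x + y) ≤ 1 := by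
  have hpos : 0 < x + y := lt_of_le_of_ne (by linarith) (Ne.symm hxy)
  rw [div_le_one hpos]; linarith

lemma ratio_eq_zero {x y : ℝ} (hxy : x + y ≠ 0) : x / (x + y) = 0 ↔ x = 0 := by
  rw [div_eq_zero_iff]
  exact ⟨fun h => h.resolve_right hxy, fun h => Or.inl h⟩

lemma ratio_eq_one {x y : ℝ} (hxy : x + y ≠ 0) : x / (x + y) = 1 ↔ y = 0 := by
  rw [div_eq_one_iff_eq hxy]
  constructor
  · intro h; linarith
  · intro h; rw [h]; ring

/-- superadditivity of `Sv` on disjoint co-zero sets -/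
lemma id1_ge (hO : IsObsAlg o) (hql : QuasiLinear o E) (hpos : PositiveFunc o E)
    (hnorm : E (fun _ => 1) = 1) (h1 : (fun _ : Ω => (1:ℝ)) ∈ o)
    {U V : Set Ω} (hd : U ∩ V = ∅) :
    Sv o E U + Sv o E V ≤ Sv o E (U ∪ V) := by
  have hdis : ∀ ω, ω ∈ U → ω ∉ V := by
    intro ω h1' h2'
    have hm : ω ∈ U ∩ V := ⟨h1', h2'⟩
    rw [hd] at hm
    exact hm
  have key : ∀ r1 ∈ Sset o E U, ∀ r2 ∈ Sset o E V, r1 + r2 ≤ Sv o E (U ∪ V) := by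
    intro r1 hr1 r2 hr2
    obtain ⟨X, u, haX, hleX⟩ := sset_elim hO hql hpos hr1
    obtain ⟨Y, v, haY, hleY⟩ := sset_elim hO hql hpos hr2
    obtain ⟨hXb, hub, hX01, hu0, huU, husupp⟩ := haX
    obtain ⟨hYb, hvb, hY01, hv0, hvV, hvsupp⟩ := haY
    have horth : ∀ ω, X ω = 0 ∨ Y ω = 0 := by
      intro ω
      by_cases hω : u ω = 0
      · right
        refine hvsupp ω (fun hv' => ?_)
        exact hdis ω (huU ω hω) (hvV ω hv')
      · left; exact husupp ω hω
    have hadd := oa hO hql hXb hYb (fun ω => (hX01 ω).1) (fun ω => (hY01 ω).1) horth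
    have hsum01 : ∀ ω, 0 ≤ X ω + Y ω ∧ X ω + Y ω ≤ 1 := by
      intro ω
      have h1' := (hX01 ω); have h2' := (hY01 ω)
      refine ⟨by linarith [h1'.1, h2'.1], ?_⟩
      rcases horth ω with h | h <;> rw [h]
      · linarith [h2'.2]
      · linarith [h1'.2]
    have hadm : Adm o (U ∪ V) (fun ω => X ω + Y ω) (fun ω => u ω * v ω) := by
      refine ⟨⟨mem2 hO hXb.1 hYb.1 (fun x y => x + y) (fun ω => by fun_prop), 1, fun ω => ?_⟩,
        ⟨mem2 hO hub.1 hvb.1 (fun x y => x * y) (fun ω => by fun_prop), ?_⟩,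
        hsum01, fun ω => mul_nonneg (hu0 ω) (hv0 ω), fun ω hω => ?_, fun ω hω => ?_⟩
      · have h1' := (hsum01 ω).1; have h2' := (hsum01 ω).2
        have : |X ω + Y ω| ≤ 1 := abs_le.mpr ⟨by linarith, h2'⟩
        simpa using this
      · obtain ⟨Mu, hMu⟩ := hub.2
        obtain ⟨Mv, hMv⟩ := hvb.2
        refine ⟨Mu * Mv, fun ω => ?_⟩
        rw [abs_mul]
        exact mul_le_mul (hMu ω) (hMv ω) (abs_nonneg _) (le_trans (abs_nonneg _) (hMu ω))
      · rcases mul_eq_zero.mp hω with h | h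
        · exact Or.inl (huU ω h)
        · exact Or.inr (hvV ω h)
      · have h' : u ω ≠ 0 ∧ v ω ≠ 0 := by
          constructor <;> intro hc
          · exact hω (show u ω * v ω = 0 by rw [hc]; ring)
          · exact hω (show u ω * v ω = 0 by rw [hc]; ring)
        show X ω + Y ω = 0
        rw [husupp ω h'.1, hvsupp ω h'.2]; ring
    have := EX_le_Sv hO hql hpos hnorm hadm
    rw [hadd] at this
    linarith
  have h0U := sset_zero_mem hO hql hnorm h1 (U := U)
  have h0V := sset_zero_mem hO hql hnorm h1 (U := V)
  have h2 : ∀ r1 ∈ Sset o E U, r1 + Sv o E V ≤ Sv o E (U ∪ V) := by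
    intro r1 hr1
    have : Sv o E V ≤ Sv o E (U ∪ V) - r1 := by
      refine Real.sSup_le (fun r2 hr2 => by linarith [key r1 hr1 r2 hr2]) ?_
      linarith [key r1 hr1 0 h0V]
    linarith
  have : Sv o E U ≤ Sv o E (U ∪ V) - Sv o E V := by
    refine Real.sSup_le (fun r1 hr1 => by linarith [h2 r1 hr1]) ?_
    linarith [h2 0 h0U]
  linarith

/-- subadditivity of `Sv` on disjoint co-zero sets -/
lemma id1_le (hO : IsObsAlg o) (hql : QuasiLinear o E) (hpos : PositiveFunc o E)
    (hnorm : E (fun _ => 1) = 1) (h1 : (fun _ : Ω => (1:ℝ)) ∈ o)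
    {U V : Set Ω} (hU : IsCozeroSet o U) (hV : IsCozeroSet o V) (hd : U ∩ V = ∅) :
    Sv o E (U ∪ V) ≤ Sv o E U + Sv o E V := by
  obtain ⟨a, ha, hab, ha01, hca⟩ := zc hO hU
  obtain ⟨b, hb, hbb, hb01, hcb⟩ := zc hO hV
  -- ω ∈ U ↔ a ω ≠ 0 ; ω ∈ V ↔ b ω ≠ 0
  have haU : ∀ ω, ω ∈ U ↔ a ω ≠ 0 := by
    intro ω
    rw [← Set.notMem_compl_iff, hca ω]
  have hbV : ∀ ω, ω ∈ V ↔ b ω ≠ 0 := by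
    intro ω
    rw [← Set.notMem_compl_iff, hcb ω]
  have hab0 : ∀ ω, a ω = 0 ∨ b ω = 0 := by
    intro ω
    by_contra hc
    push_neg at hc
    have hm : ω ∈ U ∩ V := ⟨(haU ω).mpr hc.1, (hbV ω).mpr hc.2⟩
    rw [hd] at hm
    exact hm
  have hSvV0 := Sv_nonneg hO hql hpos hnorm h1 V
  have hSvU0 := Sv_nonneg hO hql hpos hnorm h1 U
  refine Sv_le_of_adm hO hql hpos (by linarith) (fun X w ha => ?_)
  obtain ⟨hXb, hwb, hX01, hw0, hwUV, hwsupp⟩ := ha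
  set w1 : Ω → ℝ := fun ω => w ω + b ω with hw1def
  set w2 : Ω → ℝ := fun ω => w ω + a ω with hw2def
  have hw1o : w1 ∈ o := mem2 hO hwb.1 hb (fun x y => x + y) (fun ω => by fun_prop)
  have hw2o : w2 ∈ o := mem2 hO hwb.1 ha (fun x y => x + y) (fun ω => by fun_prop)
  have hw1nn : ∀ ω, 0 ≤ w1 ω := fun ω => by
    have := hw0 ω; have := (hb01 ω).1; simp only [hw1def]; linarith
  have hw2nn : ∀ ω, 0 ≤ w2 ω := fun ω => by
    have := hw0 ω; have := (ha01 ω).1; simp only [hw2def]; linarith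
  have hden : ∀ ω, w2 ω + w1 ω ≠ 0 := by
    intro ω hc
    have hw1z : w1 ω = 0 := by have := hw1nn ω; have := hw2nn ω; linarith
    have hw2z : w2 ω = 0 := by have := hw1nn ω; have := hw2nn ω; linarith
    have hwz : w ω = 0 := by
      have := hw0 ω; have := (hb01 ω).1
      simp only [hw1def] at hw1z; linarith
    have haz : a ω = 0 := by
      have := hw0 ω; simp only [hw2def] at hw2z; linarith
    have hbz : b ω = 0 := by
      have := hw0 ω; simp only [hw1def] at hw1z; linarith
    rcases hwUV ω hwz with h | h
    · exact (haU ω).mp h haz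
    · exact (hbV ω).mp h hbz
  set σ : Ω → ℝ := fun ω => w2 ω / (w2 ω + w1 ω) with hσdef
  have hσo : σ ∈ o :=
    mem2 hO hw2o hw1o (fun x y => x / (x + y))
      (fun ω => ContinuousAt.div (continuous_fst.continuousAt)
        ((continuous_fst.add continuous_snd).continuousAt) (hden ω))
  have hσ0 : ∀ ω, 0 ≤ σ ω := fun ω => ratio_nonneg (hw2nn ω) (hw1nn ω)
  have hσ1 : ∀ ω, σ ω ≤ 1 := fun ω => ratio_le_one (hw2nn ω) (hw1nn ω) (hden ω)
  have hσeq1 : ∀ ω, w1 ω = 0 → σ ω = 1 := fun ω h => (ratio_eq_one (hden ω)).mpr h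
  have hσeq0 : ∀ ω, w2 ω = 0 → σ ω = 0 := fun ω h => (ratio_eq_zero (hden ω)).mpr h
  set X1 : Ω → ℝ := fun ω => X ω * σ ω with hX1def
  set X2 : Ω → ℝ := fun ω => X ω * (1 - σ ω) with hX2def
  have hX1b : MemBdd o X1 := by
    refine ⟨mem2 hO hXb.1 hσo (fun x y => x * y) (fun ω => by fun_prop), 1, fun ω => ?_⟩
    rw [abs_le]
    constructor
    · have := mul_nonneg (hX01 ω).1 (hσ0 ω); simp only [hX1def]; linarith
    · simp only [hX1def]
      exact le_trans (mul_le_one₀ (hX01 ω).2 (hσ0 ω) (hσ1 ω)) le_rfl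
  have hX2b : MemBdd o X2 := by
    refine ⟨mem2 hO hXb.1 hσo (fun x y => x * (1 - y)) (fun ω => by fun_prop), 1, fun ω => ?_⟩
    rw [abs_le]
    have h1' : 0 ≤ 1 - σ ω := by linarith [hσ1 ω]
    have h2' : 1 - σ ω ≤ 1 := by linarith [hσ0 ω]
    constructor
    · have := mul_nonneg (hX01 ω).1 h1'; simp only [hX2def]; linarith
    · simp only [hX2def]
      exact mul_le_one₀ (hX01 ω).2 h1' h2'
  -- case analysis facts
  have hkey : ∀ ω, w ω = 0 → (w1 ω = 0 ∨ w2 ω = 0) := by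
    intro ω hw
    rcases hab0 ω with h | h
    · right; simp only [hw2def]; rw [hw, h]; ring
    · left; simp only [hw1def]; rw [hw, h]; ring
  have horth : ∀ ω, X1 ω = 0 ∨ X2 ω = 0 := by
    intro ω
    by_cases hw : w ω = 0
    · rcases hkey ω hw with h | h
      · right; simp only [hX2def]; rw [hσeq1 ω h]; ring
      · left; simp only [hX1def]; rw [hσeq0 ω h]; ring
    · left; simp only [hX1def]; rw [hwsupp ω hw]; ring
  have hsum : (fun ω => X1 ω + X2 ω) = X := by
    funext ω
    simp only [hX1def, hX2def]; ring
  have hadd := oa hO hql hX1b hX2b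
    (fun ω => mul_nonneg (hX01 ω).1 (hσ0 ω))
    (fun ω => mul_nonneg (hX01 ω).1 (by linarith [hσ1 ω])) horth
  rw [hsum] at hadd
  have hadm1 : Adm o U X1 w1 := by
    refine ⟨hX1b, ⟨hw1o, ?_⟩, fun ω => ?_, hw1nn, fun ω hω => ?_, fun ω hω => ?_⟩
    · obtain ⟨Mw, hMw⟩ := hwb.2
      refine ⟨Mw + 1, fun ω => ?_⟩
      have := abs_le.mp (hMw ω); have := (hb01 ω).1; have := (hb01 ω).2
      rw [abs_le]; simp only [hw1def]; constructor <;> linarith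
    · exact ⟨mul_nonneg (hX01 ω).1 (hσ0 ω),
        mul_le_one₀ (hX01 ω).2 (hσ0 ω) (hσ1 ω)⟩
    · -- w1 ω = 0 → ω ∈ U
      have hwz : w ω = 0 := by
        have := hw0 ω; have := (hb01 ω).1; simp only [hw1def] at hω; linarith
      have hbz : b ω = 0 := by
        have := hw0 ω; have := (hb01 ω).1; simp only [hw1def] at hω; linarith
      rcases hwUV ω hwz with h | h
      · exact h
      · exact absurd hbz ((hbV ω).mp h)
    · -- w1 ω ≠ 0 → X1 ω = 0
      by_cases hw : w ω = 0
      · have hbnz : b ω ≠ 0 := by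
          intro hc
          exact hω (by simp only [hw1def]; rw [hw, hc]; ring)
        have haz : a ω = 0 := (hab0 ω).resolve_right hbnz
        have : w2 ω = 0 := by simp only [hw2def]; rw [hw, haz]; ring
        simp only [hX1def]; rw [hσeq0 ω this]; ring
      · simp only [hX1def]; rw [hwsupp ω hw]; ring
  have hadm2 : Adm o V X2 w2 := by
    refine ⟨hX2b, ⟨hw2o, ?_⟩, fun ω => ?_, hw2nn, fun ω hω => ?_, fun ω hω => ?_⟩
    · obtain ⟨Mw, hMw⟩ := hwb.2
      refine ⟨Mw + 1, fun ω => ?_⟩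
      have := abs_le.mp (hMw ω); have := (ha01 ω).1; have := (ha01 ω).2
      rw [abs_le]; simp only [hw2def]; constructor <;> linarith
    · have h1' : 0 ≤ 1 - σ ω := by linarith [hσ1 ω]
      exact ⟨mul_nonneg (hX01 ω).1 h1',
        mul_le_one₀ (hX01 ω).2 h1' (by linarith [hσ0 ω])⟩
    · have hwz : w ω = 0 := by
        have := hw0 ω; have := (ha01 ω).1; simp only [hw2def] at hω; linarith
      have haz : a ω = 0 := by
        have := hw0 ω; simp only [hw2def] at hω; linarith
      rcases hwUV ω hwz with h | h
      · exact absurd haz ((haU ω).mp h)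
      · exact h
    · by_cases hw : w ω = 0
      · have hanz : a ω ≠ 0 := by
          intro hc
          exact hω (by simp only [hw2def]; rw [hw, hc]; ring)
        have hbz : b ω = 0 := (hab0 ω).resolve_left hanz
        have : w1 ω = 0 := by simp only [hw1def]; rw [hw, hbz]; ring
        simp only [hX2def]; rw [hσeq1 ω this]; ring
      · simp only [hX2def]; rw [hwsupp ω hw]; ring
  have hle1 := EX_le_Sv hO hql hpos hnorm hadm1
  have hle2 := EX_le_Sv hO hql hpos hnorm hadm2
  linarith

lemma id1 (hO : IsObsAlg o) (hql : QuasiLinear o E) (hpos : PositiveFunc o E)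
    (hnorm : E (fun _ => 1) = 1) (h1 : (fun _ : Ω => (1:ℝ)) ∈ o)
    {U V : Set Ω} (hU : IsCozeroSet o U) (hV : IsCozeroSet o V) (hd : U ∩ V = ∅) :
    Sv o E (U ∪ V) = Sv o E U + Sv o E V :=
  le_antisymm (id1_le hO hql hpos hnorm h1 hU hV hd) (id1_ge hO hql hpos hnorm h1 hd)

end ident
section ident2

variable {o : Set (Ω → ℝ)} {E : (Ω → ℝ) → ℝ}

lemma eadd (hql : QuasiLinear o E) {h : Ω → ℝ} (hh : MemBdd o h) (φ ψ : ℝ → ℝ)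
    (hφ : Continuous φ) (hψ : Continuous ψ) :
    E (fun ω => φ (h ω) + ψ (h ω)) = E (fun ω => φ (h ω)) + E (fun ω => ψ (h ω)) := by
  have := lin2 hql hh φ ψ hφ hψ 1 1
  have e1 : (fun ω => 1 * φ (h ω) + 1 * ψ (h ω)) = (fun ω => φ (h ω) + ψ (h ω)) := by
    funext ω; ring
  rw [e1] at this
  rw [this]; ring

lemma eaffine (hql : QuasiLinear o E) (hnorm : E (fun _ => 1) = 1) {h : Ω → ℝ}
    (hh : MemBdd o h) (c : ℝ) (φ : ℝ → ℝ) (hφ : Continuous φ) :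
    E (fun ω => c + φ (h ω)) = c + E (fun ω => φ (h ω)) := by
  have := lin2 hql hh φ (fun _ => 1) hφ continuous_const 1 c
  have e1 : (fun ω => 1 * φ (h ω) + c * 1) = (fun ω => c + φ (h ω)) := by
    funext ω; ring
  rw [e1] at this
  rw [this, hnorm]; ring

/-- the tent inequality for `id2_ge` : `1 ≤ ψ₁ t + ψ₂ t ≤ 2` on `[0,1]`. -/
lemma tent_ge {t : ℝ} (h0 : 0 ≤ t) (h1 : t ≤ 1) :
    1 ≤ min (max (4*t - 1) 0) 1 + min (max (4*(1-t) - 1) 0) 1 ∧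
    min (max (4*t - 1) 0) 1 + min (max (4*(1-t) - 1) 0) 1 ≤ 2 := by
  constructor
  · rcases le_total t (1/2) with h | h
    · have h2 : min (max (4*(1-t) - 1) 0) 1 = 1 := by
        rw [min_eq_right]
        exact le_trans (by linarith) (le_max_left _ _)
      rw [h2]
      have : 0 ≤ min (max (4*t - 1) 0) 1 := le_min (le_max_right _ _) zero_le_one
      linarith
    · have h2 : min (max (4*t - 1) 0) 1 = 1 := by
        rw [min_eq_right]
        exact le_trans (by linarith) (le_max_left _ _)
      rw [h2]
      have : 0 ≤ min (max (4*(1-t) - 1) 0) 1 := le_min (le_max_right _ _) zero_le_one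
      linarith
  · have a1 : min (max (4*t - 1) 0) 1 ≤ 1 := min_le_right _ _
    have a2 : min (max (4*(1-t) - 1) 0) 1 ≤ 1 := min_le_right _ _
    linarith

/-- `1 + Sv (Aᶜ ∩ Bᶜ) ≤ Sv Aᶜ + Sv Bᶜ` for disjoint zero sets. -/
lemma id2_ge (hO : IsObsAlg o) (hql : QuasiLinear o E) (hpos : PositiveFunc o E)
    (hnorm : E (fun _ => 1) = 1) (h1 : (fun _ : Ω => (1:ℝ)) ∈ o)
    {A B : Set Ω} (hA : IsZeroSet o A) (hB : IsZeroSet o B) (hd : A ∩ B = ∅) :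
    1 + Sv o E (Aᶜ ∩ Bᶜ) ≤ Sv o E Aᶜ + Sv o E Bᶜ := by
  obtain ⟨α, hαo, hαb, hα01, hcα⟩ := zc hO hA
  obtain ⟨β, hβo, hβb, hβ01, hcβ⟩ := zc hO hB
  have hdαβ : ∀ ω, α ω + β ω ≠ 0 := by
    intro ω hc
    have hα0 : α ω = 0 := by have := (hα01 ω).1; have := (hβ01 ω).1; linarith
    have hβ0 : β ω = 0 := by have := (hα01 ω).1; have := (hβ01 ω).1; linarith
    have hm : ω ∈ A ∩ B := ⟨(hcα ω).mpr hα0, (hcβ ω).mpr hβ0⟩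
    rw [hd] at hm
    exact hm
  have key : ∀ r ∈ Sset o E (Aᶜ ∩ Bᶜ), 1 + r ≤ Sv o E Aᶜ + Sv o E Bᶜ := by
    intro r hr
    obtain ⟨W, w, haW, hleW⟩ := sset_elim hO hql hpos hr
    obtain ⟨hWb, hwb, hW01, hw0, hwIn, hwsupp⟩ := haW
    -- R = α/(α+β)
    set R : Ω → ℝ := fun ω => α ω / (α ω + β ω) with hRdef
    have hRo : R ∈ o := mem2 hO hαo hβo (fun x y => x / (x + y))
      (fun ω => ContinuousAt.div continuous_fst.continuousAt
        ((continuous_fst.add continuous_snd).continuousAt) (hdαβ ω))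
    have hR0 : ∀ ω, 0 ≤ R ω := fun ω => ratio_nonneg (hα01 ω).1 (hβ01 ω).1
    have hR1 : ∀ ω, R ω ≤ 1 := fun ω => ratio_le_one (hα01 ω).1 (hβ01 ω).1 (hdαβ ω)
    have hRA : ∀ ω, ω ∈ A → R ω = 0 := fun ω h =>
      (ratio_eq_zero (hdαβ ω)).mpr ((hcα ω).mp h)
    have hRB : ∀ ω, ω ∈ B → R ω = 1 := fun ω h =>
      (ratio_eq_one (hdαβ ω)).mpr ((hcβ ω).mp h)
    have hRnA : ∀ ω, ω ∉ A → R ω ≠ 0 := by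
      intro ω h hc
      exact h ((hcα ω).mpr ((ratio_eq_zero (hdαβ ω)).mp hc))
    have hRnB : ∀ ω, ω ∉ B → R ω ≠ 1 := by
      intro ω h hc
      exact h ((hcβ ω).mpr ((ratio_eq_one (hdαβ ω)).mp hc))
    set eA : Ω → ℝ := fun ω => min (w ω) (1 - R ω) with heAdef
    set eB : Ω → ℝ := fun ω => min (w ω) (R ω) with heBdef
    have heAo : eA ∈ o := mem2 hO hwb.1 hRo (fun x y => min x (1 - y)) (fun ω => by fun_prop)
    have heBo : eB ∈ o := mem2 hO hwb.1 hRo (fun x y => min x y) (fun ω => by fun_prop)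
    have heA0 : ∀ ω, 0 ≤ eA ω := fun ω => le_min (hw0 ω) (by linarith [hR1 ω])
    have heB0 : ∀ ω, 0 ≤ eB ω := fun ω => le_min (hw0 ω) (hR0 ω)
    have hdenA : ∀ ω, eA ω + R ω ≠ 0 := by
      intro ω hc
      have heAz : eA ω = 0 := by have := heA0 ω; have := hR0 ω; linarith
      have hRz : R ω = 0 := by have := heA0 ω; have := hR0 ω; linarith
      have hAmem : ω ∈ A := (hcα ω).mpr ((ratio_eq_zero (hdαβ ω)).mp hRz)
      have hwnz : w ω ≠ 0 := by
        intro hwz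
        have := hwIn ω hwz
        exact this.1 hAmem
      have hwpos : 0 < w ω := lt_of_le_of_ne (hw0 ω) (Ne.symm hwnz)
      have h1R : 1 - R ω = 1 := by rw [hRz]; ring
      rw [heAdef] at heAz
      simp only [h1R] at heAz
      rcases le_total (w ω) 1 with h | h
      · rw [min_eq_left h] at heAz; linarith
      · rw [min_eq_right h] at heAz; linarith
    have hdenB : ∀ ω, eB ω + (1 - R ω) ≠ 0 := by
      intro ω hc
      have heBz : eB ω = 0 := by have := heB0 ω; have := hR1 ω; linarith
      have hRz : R ω = 1 := by have := heB0 ω; have := hR1 ω; linarith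
      have hBmem : ω ∈ B := (hcβ ω).mpr ((ratio_eq_one (hdαβ ω)).mp hRz)
      have hwnz : w ω ≠ 0 := by
        intro hwz
        exact (hwIn ω hwz).2 hBmem
      have hwpos : 0 < w ω := lt_of_le_of_ne (hw0 ω) (Ne.symm hwnz)
      rw [heBdef] at heBz
      simp only [hRz] at heBz
      rcases le_total (w ω) 1 with h | h
      · rw [min_eq_left h] at heBz; linarith
      · rw [min_eq_right h] at heBz; linarith
    set βA : Ω → ℝ := fun ω => eA ω / (eA ω + R ω) with hβAdef
    set βB : Ω → ℝ := fun ω => eB ω / (eB ω + (1 - R ω)) with hβBdef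
    have hβAo : βA ∈ o := mem2 hO heAo hRo (fun x y => x / (x + y))
      (fun ω => ContinuousAt.div continuous_fst.continuousAt
        ((continuous_fst.add continuous_snd).continuousAt) (hdenA ω))
    have hβBo : βB ∈ o := mem2 hO heBo hRo (fun x y => x / (x + (1 - y)))
      (fun ω => ContinuousAt.div continuous_fst.continuousAt
        ((continuous_fst.add (continuous_const.sub continuous_snd)).continuousAt) (hdenB ω))
    have hβA01 : ∀ ω, 0 ≤ βA ω ∧ βA ω ≤ 1 := fun ω =>
      ⟨ratio_nonneg (heA0 ω) (hR0 ω), ratio_le_one (heA0 ω) (hR0 ω) (hdenA ω)⟩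
    have hβB01 : ∀ ω, 0 ≤ βB ω ∧ βB ω ≤ 1 := fun ω =>
      ⟨ratio_nonneg (heB0 ω) (by linarith [hR1 ω]), ratio_le_one (heB0 ω) (by linarith [hR1 ω]) (hdenB ω)⟩
    set σ : Ω → ℝ := fun ω => (1 + βB ω - βA ω) / 2 with hσdef
    have hσo : σ ∈ o := mem2 hO hβBo hβAo (fun x y => (1 + x - y)/2) (fun ω => by fun_prop)
    have hσb : MemBdd o σ := by
      refine ⟨hσo, 1, fun ω => ?_⟩
      have := hβA01 ω; have := hβB01 ω
      rw [abs_le]; simp only [hσdef]; constructor <;> [linarith [this.1]; linarith]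
    have hσ01 : ∀ ω, 0 ≤ σ ω ∧ σ ω ≤ 1 := by
      intro ω
      have h1' := hβA01 ω; have h2' := hβB01 ω
      constructor <;> simp only [hσdef] <;> [linarith; linarith]
    -- values of σ on A, B, and {w = 0}
    have hσA : ∀ ω, ω ∈ A → σ ω = 0 := by
      intro ω hmem
      have hR := hRA ω hmem
      have heBz : eB ω = 0 := by
        simp only [heBdef, hR]
        exact min_eq_right (hw0 ω)
      have hβBz : βB ω = 0 := by
        rw [hβBdef]
        exact (ratio_eq_zero (hdenB ω)).mpr heBz
      have hβA1 : βA ω = 1 := by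
        rw [hβAdef]
        exact (ratio_eq_one (hdenA ω)).mpr hR
      simp only [hσdef, hβBz, hβA1]; ring
    have hσB : ∀ ω, ω ∈ B → σ ω = 1 := by
      intro ω hmem
      have hR := hRB ω hmem
      have heAz : eA ω = 0 := by
        simp only [heAdef, hR]
        have : (1:ℝ) - 1 = 0 := by ring
        rw [this]
        exact min_eq_right (hw0 ω)
      have hβAz : βA ω = 0 := by
        rw [hβAdef]
        exact (ratio_eq_zero (hdenA ω)).mpr heAz
      have hβB1 : βB ω = 1 := by
        rw [hβBdef]
        refine (ratio_eq_one (hdenB ω)).mpr (by rw [hR]; ring)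
      simp only [hσdef, hβAz, hβB1]; ring
    have hσH : ∀ ω, w ω = 0 → σ ω = 1/2 := by
      intro ω hw
      have heAz : eA ω = 0 := by
        simp only [heAdef, hw]
        exact min_eq_left (by linarith [hR1 ω])
      have heBz : eB ω = 0 := by
        simp only [heBdef, hw]
        exact min_eq_left (hR0 ω)
      have hβAz : βA ω = 0 := by
        rw [hβAdef]; exact (ratio_eq_zero (hdenA ω)).mpr heAz
      have hβBz : βB ω = 0 := by
        rw [hβBdef]; exact (ratio_eq_zero (hdenB ω)).mpr heBz
      simp only [hσdef, hβAz, hβBz]; ring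
    -- the two admissible functions
    have hXadm : Adm o Aᶜ (fun ω => min (max (4 * σ ω - 1) 0) 1)
        (fun ω => max (1/4 - σ ω) 0) := by
      refine ⟨⟨mem1 hO hσo (fun t => min (max (4*t - 1) 0) 1) (by fun_prop), 1, fun ω => ?_⟩,
        ⟨mem1 hO hσo (fun t => max (1/4 - t) 0) (by fun_prop), 1, fun ω => ?_⟩,
        fun ω => ⟨le_min (le_max_right _ _) zero_le_one, min_le_right _ _⟩,
        fun ω => le_max_right _ _, fun ω hω => ?_, fun ω hω => ?_⟩
      · rw [abs_le]
        have : (0:ℝ) ≤ min (max (4 * σ ω - 1) 0) 1 := le_min (le_max_right _ _) zero_le_one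
        have : min (max (4 * σ ω - 1) 0) 1 ≤ 1 := min_le_right _ _
        constructor <;> linarith [le_min (le_max_right (4 * σ ω - 1) 0) zero_le_one]
      · rw [abs_le]
        have hh1 : (0:ℝ) ≤ max (1/4 - σ ω) 0 := le_max_right _ _
        have hh2 : max (1/4 - σ ω) 0 ≤ 1 :=
          max_le (by linarith [(hσ01 ω).1]) zero_le_one
        constructor <;> linarith
      · -- max (1/4 - σ) 0 = 0 → ω ∈ Aᶜ
        intro hmem
        have hσz := hσA ω hmem
        simp only [hσz] at hω
        norm_num at hω
      · -- max (1/4 - σ) 0 ≠ 0 → X = 0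
        have hσlt : σ ω < 1/4 := by
          by_contra hc
          push_neg at hc
          exact hω (max_eq_right (by linarith))
        show min (max (4 * σ ω - 1) 0) 1 = 0
        have he : max (4 * σ ω - 1) 0 = 0 := max_eq_right (by linarith)
        rw [he]
        exact min_eq_left zero_le_one
    have hYadm : Adm o Bᶜ (fun ω => min (max (4 * (1 - σ ω) - 1) 0) 1)
        (fun ω => max (σ ω - 3/4) 0) := by
      refine ⟨⟨mem1 hO hσo (fun t => min (max (4*(1-t) - 1) 0) 1) (by fun_prop), 1, fun ω => ?_⟩,
        ⟨mem1 hO hσo (fun t => max (t - 3/4) 0) (by fun_prop), 1, fun ω => ?_⟩,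
        fun ω => ⟨le_min (le_max_right _ _) zero_le_one, min_le_right _ _⟩,
        fun ω => le_max_right _ _, fun ω hω => ?_, fun ω hω => ?_⟩
      · rw [abs_le]
        have hh1 : (0:ℝ) ≤ min (max (4 * (1 - σ ω) - 1) 0) 1 :=
          le_min (le_max_right _ _) zero_le_one
        have hh2 : min (max (4 * (1 - σ ω) - 1) 0) 1 ≤ 1 := min_le_right _ _
        constructor <;> linarith
      · rw [abs_le]
        have hh1 : (0:ℝ) ≤ max (σ ω - 3/4) 0 := le_max_right _ _
        have hh2 : max (σ ω - 3/4) 0 ≤ 1 := max_le (by linarith [(hσ01 ω).2]) zero_le_one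
        constructor <;> linarith
      · intro hmem
        have hσz := hσB ω hmem
        simp only [hσz] at hω
        norm_num at hω
      · have hσgt : 3/4 < σ ω := by
          by_contra hc
          push_neg at hc
          exact hω (max_eq_right (by linarith))
        show min (max (4 * (1 - σ ω) - 1) 0) 1 = 0
        have he : max (4 * (1 - σ ω) - 1) 0 = 0 := max_eq_right (by linarith)
        rw [he]
        exact min_eq_left zero_le_one
    have hleX := EX_le_Sv hO hql hpos hnorm hXadm
    have hleY := EX_le_Sv hO hql hpos hnorm hYadm
    -- sum within the algebra of σ
    have hsum := eadd hql hσb (fun t => min (max (4*t - 1) 0) 1)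
      (fun t => min (max (4*(1-t) - 1) 0) 1) (by fun_prop) (by fun_prop)
    -- E (sum) = 1 + E ρ
    have haff := eaffine hql hnorm hσb 1
      (fun t => min (max (4*t - 1) 0) 1 + min (max (4*(1-t) - 1) 0) 1 - 1) (by fun_prop)
    have hfe : (fun ω => 1 + (fun t => min (max (4*t - 1) 0) 1 + min (max (4*(1-t) - 1) 0) 1 - 1) (σ ω))
        = (fun ω => (fun t => min (max (4*t - 1) 0) 1) (σ ω) + (fun t => min (max (4*(1-t) - 1) 0) 1) (σ ω)) := by
      funext ω; ring
    rw [hfe] at haff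
    -- kl : E W ≤ E (ρ ∘ σ)
    have hklW : E W ≤ E (fun ω =>
        (fun t => min (max (4*t - 1) 0) 1 + min (max (4*(1-t) - 1) 0) 1 - 1) (σ ω)) := by
      refine kl hO hql hpos hWb
        (membdd1 hO hσb (fun t => min (max (4*t - 1) 0) 1 + min (max (4*(1-t) - 1) 0) 1 - 1)
          (by fun_prop))
        (fun ω => (hW01 ω).1) (fun ω => (hW01 ω).2) (fun ω => ?_) (fun ω => ?_) (fun ω hne => ?_)
      · have := (tent_ge (hσ01 ω).1 (hσ01 ω).2).1
        simp only []
        linarith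
      · have := (tent_ge (hσ01 ω).1 (hσ01 ω).2).2
        simp only []
        linarith
      · by_contra hWnz
        have hwz : w ω = 0 := by
          by_contra hwnz
          exact hWnz (hwsupp ω hwnz)
        have hσh := hσH ω hwz
        apply hne
        simp only [hσh]
        norm_num
    -- put it together
    calc 1 + r ≤ 1 + E W := by linarith
      _ ≤ 1 + E (fun ω => min (max (4*σ ω - 1) 0) 1 + min (max (4*(1-σ ω) - 1) 0) 1 - 1) := by
          linarith [hklW]
      _ = E (fun ω => min (max (4*σ ω - 1) 0) 1 + min (max (4*(1-σ ω) - 1) 0) 1) := haff.symm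
      _ = E (fun ω => min (max (4*σ ω - 1) 0) 1) + E (fun ω => min (max (4*(1-σ ω) - 1) 0) 1) :=
          hsum
      _ ≤ Sv o E Aᶜ + Sv o E Bᶜ := by linarith
  have h0 := sset_zero_mem hO hql hnorm h1 (U := Aᶜ ∩ Bᶜ)
  have hside := key 0 h0
  have hfin : Sv o E (Aᶜ ∩ Bᶜ) ≤ Sv o E Aᶜ + Sv o E Bᶜ - 1 :=
    Real.sSup_le (fun r hr => by linarith [key r hr]) (by linarith)
  linarith

end ident2
section ident2b

variable {o : Set (Ω → ℝ)} {E : (Ω → ℝ) → ℝ}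

lemma tech_le_half {n t : ℝ} (hn : 4 ≤ n) (h0 : 0 ≤ t) (hhalf : t ≤ 1/2) :
    min (2*t) 1 + min (2*(1-t)) 1 ≤ 1 + 2/n + max (min (min (n*t - 1) (n*(1-t) - 1)) 1) 0 := by
  have hn0 : (0:ℝ) < n := by linarith
  have e2 : min (2*(1-t)) 1 = 1 := min_eq_right (by linarith)
  have e1 : min (2*t) 1 = 2*t := min_eq_left (by linarith)
  rw [e1, e2]
  rcases le_total t (1/n) with h2 | h2
  · have h3 : 2*t ≤ 2/n := by
      rw [le_div_iff₀ hn0]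
      have := (le_div_iff₀ hn0).mp h2
      nlinarith
    have hχ : (0:ℝ) ≤ max (min (min (n*t - 1) (n*(1-t) - 1)) 1) 0 := le_max_right _ _
    linarith
  · have hnt : 1 ≤ n*t := by
      have := (div_le_iff₀ hn0).mp h2
      nlinarith
    have hb : 1 ≤ n*(1-t) - 1 := by nlinarith
    rcases le_total (n*t - 1) 1 with h3 | h3
    · have hmin1 : min (n*t - 1) (n*(1-t) - 1) = n*t - 1 := min_eq_left (by nlinarith)
      have hχ : max (min (min (n*t-1) (n*(1-t)-1)) 1) 0 = n*t - 1 := by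
        rw [hmin1, min_eq_left h3]
        exact max_eq_left (by nlinarith)
      rw [hχ]
      have h5 : 2/n * n = 2 := div_mul_cancel₀ 2 (ne_of_gt hn0)
      nlinarith [mul_nonneg (show (0:ℝ) ≤ n - 2 by linarith) (show (0:ℝ) ≤ n*t - 1 by linarith)]
    · have hχ : max (min (min (n*t-1) (n*(1-t)-1)) 1) 0 = 1 := by
        rw [min_eq_right (le_min h3 hb)]
        exact max_eq_left zero_le_one
      rw [hχ]
      have : 0 < 2/n := by positivity
      linarith

lemma tech_le {n t : ℝ} (hn : 4 ≤ n) (h0 : 0 ≤ t) (h1 : t ≤ 1) :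
    min (2*t) 1 + min (2*(1-t)) 1 ≤ 1 + 2/n + max (min (min (n*t - 1) (n*(1-t) - 1)) 1) 0 := by
  rcases le_total t (1/2) with h | h
  · exact tech_le_half hn h0 h
  · have h' := tech_le_half hn (t := 1 - t) (by linarith) (by linarith)
    have e : 1 - (1 - t) = t := by ring
    rw [e, min_comm (n*(1-t) - 1) (n*t - 1)] at h'
    linarith

lemma id2_le (hO : IsObsAlg o) (hql : QuasiLinear o E) (hpos : PositiveFunc o E)
    (hnorm : E (fun _ => 1) = 1) (h1 : (fun _ : Ω => (1:ℝ)) ∈ o)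
    {A B : Set Ω} (hA : IsZeroSet o A) (hB : IsZeroSet o B) (hd : A ∩ B = ∅) :
    Sv o E Aᶜ + Sv o E Bᶜ ≤ 1 + Sv o E (Aᶜ ∩ Bᶜ) := by
  obtain ⟨α, hαo, hαb, hα01, hcα⟩ := zc hO hA
  obtain ⟨β, hβo, hβb, hβ01, hcβ⟩ := zc hO hB
  have hdαβ : ∀ ω, α ω + β ω ≠ 0 := by
    intro ω hc
    have hα0 : α ω = 0 := by have := (hα01 ω).1; have := (hβ01 ω).1; linarith
    have hβ0 : β ω = 0 := by have := (hα01 ω).1; have := (hβ01 ω).1; linarith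
    have hm : ω ∈ A ∩ B := ⟨(hcα ω).mpr hα0, (hcβ ω).mpr hβ0⟩
    rw [hd] at hm
    exact hm
  have key : ∀ n : ℝ, 4 ≤ n → ∀ r1 ∈ Sset o E Aᶜ, ∀ r2 ∈ Sset o E Bᶜ,
      r1 + r2 ≤ 1 + 2/n + Sv o E (Aᶜ ∩ Bᶜ) := by
    intro n hn r1 hr1 r2 hr2
    have hn0 : (0:ℝ) < n := by linarith
    obtain ⟨X, u0, haX, hleX⟩ := sset_elim hO hql hpos hr1
    obtain ⟨Y, v0, haY, hleY⟩ := sset_elim hO hql hpos hr2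
    obtain ⟨hXb, hu0b, hX01, hu00, hu0In, hu0supp⟩ := haX
    obtain ⟨hYb, hv0b, hY01, hv00, hv0In, hv0supp⟩ := haY
    set u : Ω → ℝ := fun ω => u0 ω * β ω with hudef
    set v : Ω → ℝ := fun ω => v0 ω * α ω with hvdef
    have huo : u ∈ o := mem2 hO hu0b.1 hβo (fun x y => x * y) (fun ω => by fun_prop)
    have hvo : v ∈ o := mem2 hO hv0b.1 hαo (fun x y => x * y) (fun ω => by fun_prop)
    have hu0' : ∀ ω, 0 ≤ u ω := fun ω => mul_nonneg (hu00 ω) (hβ01 ω).1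
    have hv0' : ∀ ω, 0 ≤ v ω := fun ω => mul_nonneg (hv00 ω) (hα01 ω).1
    set R : Ω → ℝ := fun ω => α ω / (α ω + β ω) with hRdef
    have hRo : R ∈ o := mem2 hO hαo hβo (fun x y => x / (x + y))
      (fun ω => ContinuousAt.div continuous_fst.continuousAt
        ((continuous_fst.add continuous_snd).continuousAt) (hdαβ ω))
    have hR0 : ∀ ω, 0 ≤ R ω := fun ω => ratio_nonneg (hα01 ω).1 (hβ01 ω).1
    have hR1 : ∀ ω, R ω ≤ 1 := fun ω => ratio_le_one (hα01 ω).1 (hβ01 ω).1 (hdαβ ω)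
    have hRzero : ∀ ω, (R ω = 0 ↔ ω ∈ A) := by
      intro ω
      rw [ratio_eq_zero (hdαβ ω)]
      exact (hcα ω).symm
    have hRone : ∀ ω, (R ω = 1 ↔ ω ∈ B) := by
      intro ω
      rw [ratio_eq_one (hdαβ ω)]
      exact (hcβ ω).symm
    -- denominators
    have hdenX : ∀ ω, R ω + u ω ≠ 0 := by
      intro ω hc
      have hRz : R ω = 0 := by have := hR0 ω; have := hu0' ω; linarith
      have huz : u ω = 0 := by have := hR0 ω; have := hu0' ω; linarith
      have hAmem : ω ∈ A := (hRzero ω).mp hRz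
      rcases mul_eq_zero.mp huz with h | h
      · exact (hu0In ω h) hAmem
      · exact hdαβ ω (by rw [(hcα ω).mp hAmem, h]; ring)
    have hdenY : ∀ ω, (1 - R ω) + v ω ≠ 0 := by
      intro ω hc
      have hRz : R ω = 1 := by have := hR1 ω; have := hv0' ω; linarith
      have hvz : v ω = 0 := by have := hR1 ω; have := hv0' ω; linarith
      have hBmem : ω ∈ B := (hRone ω).mp hRz
      rcases mul_eq_zero.mp hvz with h | h
      · exact (hv0In ω h) hBmem
      · exact hdαβ ω (by rw [(hcβ ω).mp hBmem, h]; ring)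
    set mX : Ω → ℝ := fun ω => R ω / (R ω + u ω) with hmXdef
    set mY : Ω → ℝ := fun ω => (1 - R ω) / ((1 - R ω) + v ω) with hmYdef
    have hmXo : mX ∈ o := mem2 hO hRo huo (fun x y => x / (x + y))
      (fun ω => ContinuousAt.div continuous_fst.continuousAt
        ((continuous_fst.add continuous_snd).continuousAt) (hdenX ω))
    have hmYo : mY ∈ o := mem2 hO hRo hvo (fun x y => (1 - x) / ((1 - x) + y))
      (fun ω => ContinuousAt.div (continuous_const.sub continuous_fst).continuousAt
        (((continuous_const.sub continuous_fst).add continuous_snd).continuousAt) (hdenY ω))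
    have hmX01 : ∀ ω, 0 ≤ mX ω ∧ mX ω ≤ 1 := fun ω =>
      ⟨ratio_nonneg (hR0 ω) (hu0' ω), ratio_le_one (hR0 ω) (hu0' ω) (hdenX ω)⟩
    have hmY01 : ∀ ω, 0 ≤ mY ω ∧ mY ω ≤ 1 := fun ω =>
      ⟨ratio_nonneg (by linarith [hR1 ω]) (hv0' ω),
       ratio_le_one (by linarith [hR1 ω]) (hv0' ω) (hdenY ω)⟩
    set τ : Ω → ℝ := fun ω => (1 + mX ω - mY ω) / 2 with hτdef
    have hτo : τ ∈ o := mem2 hO hmXo hmYo (fun x y => (1 + x - y)/2) (fun ω => by fun_prop)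
    have hτ01 : ∀ ω, 0 ≤ τ ω ∧ τ ω ≤ 1 := by
      intro ω
      have := hmX01 ω; have := hmY01 ω
      constructor <;> simp only [hτdef] <;> [linarith [this.1, this.2]; linarith [this.1, this.2]]
    have hτb : MemBdd o τ := by
      refine ⟨hτo, 1, fun ω => ?_⟩
      have := hτ01 ω
      rw [abs_le]; constructor <;> linarith [this.1, this.2]
    -- key values of τ
    have hτu : ∀ ω, u ω = 0 → 1/2 ≤ τ ω := by
      intro ω hu
      have hRnz : R ω ≠ 0 := by
        intro hc
        exact hdenX ω (by rw [hc, hu]; ring)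
      have hmX1 : mX ω = 1 := by
        rw [hmXdef]
        exact (ratio_eq_one (hdenX ω)).mpr hu
      have := (hmY01 ω).2
      simp only [hτdef, hmX1]
      linarith
    have hτv : ∀ ω, v ω = 0 → τ ω ≤ 1/2 := by
      intro ω hv
      have hmY1 : mY ω = 1 := by
        rw [hmYdef]
        exact (ratio_eq_one (hdenY ω)).mpr hv
      have := (hmX01 ω).2
      simp only [hτdef, hmY1]
      linarith
    have hτA : ∀ ω, ω ∈ A → τ ω = 0 := by
      intro ω hmem
      have hRz : R ω = 0 := (hRzero ω).mpr hmem
      have hmXz : mX ω = 0 := by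
        rw [hmXdef]
        exact (ratio_eq_zero (hdenX ω)).mpr hRz
      have hvz : v ω = 0 := by
        rw [hvdef]
        simp only []
        rw [(hcα ω).mp hmem]; ring
      have hmY1 : mY ω = 1 := by
        rw [hmYdef]
        exact (ratio_eq_one (hdenY ω)).mpr hvz
      simp only [hτdef, hmXz, hmY1]; ring
    have hτB : ∀ ω, ω ∈ B → τ ω = 1 := by
      intro ω hmem
      have hRz : R ω = 1 := (hRone ω).mpr hmem
      have hmYz : mY ω = 0 := by
        rw [hmYdef]
        exact (ratio_eq_zero (hdenY ω)).mpr (by rw [hRz]; ring)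
      have huz : u ω = 0 := by
        rw [hudef]
        simp only []
        rw [(hcβ ω).mp hmem]; ring
      have hmX1 : mX ω = 1 := by
        rw [hmXdef]
        exact (ratio_eq_one (hdenX ω)).mpr huz
      simp only [hτdef, hmX1, hmYz]; ring
    -- kl comparisons
    have hklX : E X ≤ E (fun ω => min (2 * τ ω) 1) := by
      refine kl hO hql hpos hXb (membdd1 hO hτb (fun t => min (2*t) 1) (by fun_prop))
        (fun ω => (hX01 ω).1) (fun ω => (hX01 ω).2) (fun ω => ?_) (fun ω => ?_)
        (fun ω hne => ?_)
      · show 0 ≤ min (2 * τ ω) 1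
        exact le_min (by linarith [(hτ01 ω).1]) zero_le_one
      · show min (2 * τ ω) 1 ≤ 1
        exact min_le_right _ _
      · by_contra hXnz
        have hu0z : u0 ω = 0 := by
          by_contra hc
          exact hXnz (hu0supp ω hc)
        have huz : u ω = 0 := by rw [hudef]; simp only []; rw [hu0z]; ring
        have := hτu ω huz
        exact hne (show min (2 * τ ω) 1 = 1 from min_eq_right (by linarith))
    have hklY : E Y ≤ E (fun ω => min (2 * (1 - τ ω)) 1) := by
      refine kl hO hql hpos hYb (membdd1 hO hτb (fun t => min (2*(1-t)) 1) (by fun_prop))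
        (fun ω => (hY01 ω).1) (fun ω => (hY01 ω).2) (fun ω => ?_) (fun ω => ?_)
        (fun ω hne => ?_)
      · show 0 ≤ min (2 * (1 - τ ω)) 1
        exact le_min (by linarith [(hτ01 ω).2]) zero_le_one
      · show min (2 * (1 - τ ω)) 1 ≤ 1
        exact min_le_right _ _
      · by_contra hYnz
        have hv0z : v0 ω = 0 := by
          by_contra hc
          exact hYnz (hv0supp ω hc)
        have hvz : v ω = 0 := by rw [hvdef]; simp only []; rw [hv0z]; ring
        have := hτv ω hvz
        exact hne (show min (2 * (1 - τ ω)) 1 = 1 from min_eq_right (by linarith))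
    have hsum := eadd hql hτb (fun t => min (2*t) 1) (fun t => min (2*(1-t)) 1)
      (by fun_prop) (by fun_prop)
    have hmono := emono hO hql hpos hτb
      (φ := fun t => min (2*t) 1 + min (2*(1-t)) 1)
      (ψ := fun t => 1 + 2/n + max (min (min (n*t - 1) (n*(1-t) - 1)) 1) 0)
      (by fun_prop) (by fun_prop)
      (fun ω => tech_le hn (hτ01 ω).1 (hτ01 ω).2)
    have haff := eaffine hql hnorm hτb (1 + 2/n)
      (fun t => max (min (min (n*t - 1) (n*(1-t) - 1)) 1) 0) (by fun_prop)
    -- admissibility of the cutoff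
    have hadmχ : Adm o (Aᶜ ∩ Bᶜ)
        (fun ω => max (min (min (n*τ ω - 1) (n*(1-τ ω) - 1)) 1) 0)
        (fun ω => max (1/n - τ ω) 0 + max (τ ω - (1 - 1/n)) 0) := by
      refine ⟨⟨mem1 hO hτo (fun t => max (min (min (n*t - 1) (n*(1-t) - 1)) 1) 0) (by fun_prop),
          1, fun ω => ?_⟩,
        ⟨mem1 hO hτo (fun t => max (1/n - t) 0 + max (t - (1 - 1/n)) 0) (by fun_prop),
          2, fun ω => ?_⟩,
        fun ω => ⟨le_max_right _ _, max_le (min_le_right _ _) zero_le_one⟩,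
        fun ω => add_nonneg (le_max_right _ _) (le_max_right _ _),
        fun ω hω => ?_, fun ω hω => ?_⟩
      · rw [abs_le]
        have hh1 : (0:ℝ) ≤ max (min (min (n*τ ω - 1) (n*(1-τ ω) - 1)) 1) 0 := le_max_right _ _
        have hh2 : max (min (min (n*τ ω - 1) (n*(1-τ ω) - 1)) 1) 0 ≤ 1 :=
          max_le (min_le_right _ _) zero_le_one
        constructor <;> linarith
      · rw [abs_le]
        have hb1 : (0:ℝ) ≤ max (1/n - τ ω) 0 := le_max_right _ _
        have hb2 : max (1/n - τ ω) 0 ≤ 1 := by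
          refine max_le ?_ zero_le_one
          have := (hτ01 ω).1
          have : 1/n ≤ 1 := by
            rw [div_le_one hn0]; linarith
          linarith [(hτ01 ω).1]
        have hb3 : (0:ℝ) ≤ max (τ ω - (1 - 1/n)) 0 := le_max_right _ _
        have hb4 : max (τ ω - (1 - 1/n)) 0 ≤ 1 := by
          refine max_le ?_ zero_le_one
          have h1n : 1/n ≤ 1 := by
            rw [div_le_one hn0]; linarith
          linarith [(hτ01 ω).2]
        constructor <;> linarith
      · -- u' = 0 → ω ∈ Aᶜ ∩ Bᶜ
        simp only [] at hω
        have hb1 : (0:ℝ) ≤ max (1/n - τ ω) 0 := le_max_right _ _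
        have hb3 : (0:ℝ) ≤ max (τ ω - (1 - 1/n)) 0 := le_max_right _ _
        have hz1 : max (1/n - τ ω) 0 = 0 := by linarith
        have hz2 : max (τ ω - (1 - 1/n)) 0 = 0 := by linarith
        have hge : 1/n ≤ τ ω := by
          have := max_eq_right_iff.mp hz1
          linarith
        have hle' : τ ω ≤ 1 - 1/n := by
          have := max_eq_right_iff.mp hz2
          linarith
        have h1n : 0 < 1/n := by positivity
        constructor
        · intro hmem
          have := hτA ω hmem
          rw [this] at hge
          linarith
        · intro hmem
          have := hτB ω hmem
          rw [this] at hle'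
          linarith
      · -- u' ≠ 0 → χ = 0
        show max (min (min (n*τ ω - 1) (n*(1-τ ω) - 1)) 1) 0 = 0
        have hcase : τ ω < 1/n ∨ 1 - 1/n < τ ω := by
          by_contra hc
          push_neg at hc
          apply hω
          show max (1/n - τ ω) 0 + max (τ ω - (1 - 1/n)) 0 = 0
          rw [max_eq_right (by linarith [hc.1]), max_eq_right (by linarith [hc.2])]
          ring
        have hneg : min (min (n*τ ω - 1) (n*(1-τ ω) - 1)) 1 ≤ 0 := by
          rcases hcase with h | h
          · have : n * τ ω - 1 < 0 := by
              have : n * τ ω < n * (1/n) := by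
                exact mul_lt_mul_of_pos_left h hn0
              have hinv : n * (1/n) = 1 := by field_simp
              linarith
            calc min (min (n*τ ω - 1) (n*(1-τ ω) - 1)) 1 ≤ min (n*τ ω - 1) (n*(1-τ ω) - 1) :=
                  min_le_left _ _
              _ ≤ n*τ ω - 1 := min_le_left _ _
              _ ≤ 0 := by linarith
          · have : n * (1 - τ ω) - 1 < 0 := by
              have : n * (1 - τ ω) < n * (1/n) := by
                exact mul_lt_mul_of_pos_left (by linarith) hn0
              have hinv : n * (1/n) = 1 := by field_simp
              linarith
            calc min (min (n*τ ω - 1) (n*(1-τ ω) - 1)) 1 ≤ min (n*τ ω - 1) (n*(1-τ ω) - 1) :=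
                  min_le_left _ _
              _ ≤ n*(1-τ ω) - 1 := min_le_right _ _
              _ ≤ 0 := by linarith
        exact max_eq_right hneg
    have hχle := EX_le_Sv hO hql hpos hnorm hadmχ
    calc r1 + r2 ≤ E X + E Y := by linarith
      _ ≤ E (fun ω => min (2 * τ ω) 1) + E (fun ω => min (2 * (1 - τ ω)) 1) := by linarith
      _ = E (fun ω => min (2 * τ ω) 1 + min (2 * (1 - τ ω)) 1) := hsum.symm
      _ ≤ E (fun ω => 1 + 2/n + max (min (min (n*τ ω - 1) (n*(1-τ ω) - 1)) 1) 0) := hmono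
      _ = 1 + 2/n + E (fun ω => max (min (min (n*τ ω - 1) (n*(1-τ ω) - 1)) 1) 0) := haff
      _ ≤ 1 + 2/n + Sv o E (Aᶜ ∩ Bᶜ) := by linarith
  -- pass to the limit in n, then take suprema
  have key2 : ∀ r1 ∈ Sset o E Aᶜ, ∀ r2 ∈ Sset o E Bᶜ,
      r1 + r2 ≤ 1 + Sv o E (Aᶜ ∩ Bᶜ) := by
    intro r1 hr1 r2 hr2
    refine le_of_forall_pos_le_add (fun ε hε => ?_)
    set n : ℝ := max 4 (2/ε) with hndef
    have hn4 : (4:ℝ) ≤ n := le_max_left _ _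
    have hn2ε : 2/ε ≤ n := le_max_right _ _
    have hn0 : (0:ℝ) < n := by linarith
    have h2n : 2/n ≤ ε := by
      rw [div_le_iff₀ hn0]
      have h2 : ε * (2/ε) = 2 := by field_simp
      nlinarith
    have := key n hn4 r1 hr1 r2 hr2
    linarith
  have h0A := sset_zero_mem hO hql hnorm h1 (U := Aᶜ)
  have h0B := sset_zero_mem hO hql hnorm h1 (U := Bᶜ)
  have h2 : ∀ r1 ∈ Sset o E Aᶜ, r1 + Sv o E Bᶜ ≤ 1 + Sv o E (Aᶜ ∩ Bᶜ) := by
    intro r1 hr1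
    have : Sv o E Bᶜ ≤ 1 + Sv o E (Aᶜ ∩ Bᶜ) - r1 := by
      refine Real.sSup_le (fun r2 hr2 => by linarith [key2 r1 hr1 r2 hr2]) ?_
      linarith [key2 r1 hr1 0 h0B]
    linarith
  have : Sv o E Aᶜ ≤ 1 + Sv o E (Aᶜ ∩ Bᶜ) - Sv o E Bᶜ := by
    refine Real.sSup_le (fun r1 hr1 => by linarith [h2 r1 hr1]) ?_
    linarith [h2 0 h0A]
  linarith

lemma id2 (hO : IsObsAlg o) (hql : QuasiLinear o E) (hpos : PositiveFunc o E)
    (hnorm : E (fun _ => 1) = 1) (h1 : (fun _ : Ω => (1:ℝ)) ∈ o)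
    {A B : Set Ω} (hA : IsZeroSet o A) (hB : IsZeroSet o B) (hd : A ∩ B = ∅) :
    Sv o E Aᶜ + Sv o E Bᶜ = 1 + Sv o E (Aᶜ ∩ Bᶜ) :=
  le_antisymm (id2_le hO hql hpos hnorm h1 hA hB hd) (id2_ge hO hql hpos hnorm h1 hA hB hd)

end ident2b
section assemble

variable {o : Set (Ω → ℝ)} {E : (Ω → ℝ) → ℝ}

open scoped Classical in
/-- The quasi-additive probability induced by `E`. -/
noncomputable def Pv (o : Set (Ω → ℝ)) (E : (Ω → ℝ) → ℝ) : Set Ω → ℝ :=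
  fun A => if IsCozeroSet o A then Sv o E A else 1 - Sv o E Aᶜ

lemma Pco {U : Set Ω} (hU : IsCozeroSet o U) : Pv o E U = Sv o E U := by
  unfold Pv; rw [if_pos hU]

lemma wd (hO : IsObsAlg o) (hql : QuasiLinear o E) (hpos : PositiveFunc o E)
    (hnorm : E (fun _ => 1) = 1) (h1 : (fun _ : Ω => (1:ℝ)) ∈ o)
    {A : Set Ω} (hzA : IsZeroSet o A) (hcA : IsCozeroSet o A) :
    Sv o E A + Sv o E Aᶜ = 1 := by
  have hzAc : IsZeroSet o (Aᶜ) := hcA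
  have := id2 hO hql hpos hnorm h1 (A := Aᶜ) (B := A) hzAc hzA (Set.compl_inter_self A)
  rw [compl_compl, Set.inter_compl_self, Sv_empty hO hql hpos hnorm h1] at this
  linarith

lemma Pzero (hO : IsObsAlg o) (hql : QuasiLinear o E) (hpos : PositiveFunc o E)
    (hnorm : E (fun _ => 1) = 1) (h1 : (fun _ : Ω => (1:ℝ)) ∈ o)
    {A : Set Ω} (hA : IsZeroSet o A) : Pv o E A = 1 - Sv o E Aᶜ := by
  unfold Pv
  by_cases hc : IsCozeroSet o A
  · rw [if_pos hc]
    have := wd hO hql hpos hnorm h1 hA hc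
    linarith
  · rw [if_neg hc]

lemma padd_zc (hO : IsObsAlg o) (hql : QuasiLinear o E) (hpos : PositiveFunc o E)
    (hnorm : E (fun _ => 1) = 1) (h1 : (fun _ : Ω => (1:ℝ)) ∈ o)
    {A B : Set Ω} (hA : IsZeroSet o A) (hB : IsCozeroSet o B) (hd : A ∩ B = ∅)
    (hAB : IsObsSet o (A ∪ B)) :
    Pv o E (A ∪ B) = Pv o E A + Pv o E B := by
  have hd' : ∀ ω, ω ∈ A → ω ∉ B := by
    intro ω hω hω'
    have hm : ω ∈ A ∩ B := ⟨hω, hω'⟩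
    rw [hd] at hm
    exact hm
  rcases hAB with hz | hc
  · -- A ∪ B is a zero set
    rw [Pzero hO hql hpos hnorm h1 hz, Pzero hO hql hpos hnorm h1 hA, Pco hB]
    rw [Set.compl_union]
    have hV : IsCozeroSet o (Aᶜ ∩ Bᶜ) := by
      unfold IsCozeroSet
      rw [Set.compl_inter, compl_compl, compl_compl]
      exact hz
    have hdis : B ∩ (Aᶜ ∩ Bᶜ) = ∅ := by
      ext ω
      simp only [Set.mem_inter_iff, Set.mem_compl_iff, Set.mem_empty_iff_false, iff_false]
      tauto
    have hun : B ∪ (Aᶜ ∩ Bᶜ) = Aᶜ := by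
      ext ω
      simp only [Set.mem_union, Set.mem_inter_iff, Set.mem_compl_iff]
      by_cases hω : ω ∈ B
      · simp only [hω, true_or, true_iff]
        exact fun hmem => hd' ω hmem hω
      · tauto
    have hid := id1 hO hql hpos hnorm h1 hB hV hdis
    rw [hun] at hid
    linarith
  · -- A ∪ B is a co-zero set
    rw [Pco hc, Pzero hO hql hpos hnorm h1 hA, Pco hB]
    have hz' : IsZeroSet o ((A ∪ B)ᶜ) := hc
    have hdis : A ∩ (A ∪ B)ᶜ = ∅ := by
      ext ω
      simp only [Set.mem_inter_iff, Set.mem_compl_iff, Set.mem_union,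
        Set.mem_empty_iff_false, iff_false]
      tauto
    have hid := id2 hO hql hpos hnorm h1 hA hz' hdis
    rw [compl_compl] at hid
    have hinter : Aᶜ ∩ (A ∪ B) = B := by
      ext ω
      simp only [Set.mem_inter_iff, Set.mem_compl_iff, Set.mem_union]
      by_cases hω : ω ∈ B
      · simp only [hω, or_true, and_true, iff_true]
        exact fun hmem => hd' ω hmem hω
      · tauto
    rw [hinter] at hid
    linarith

lemma padd (hO : IsObsAlg o) (hql : QuasiLinear o E) (hpos : PositiveFunc o E)
    (hnorm : E (fun _ => 1) = 1) (h1 : (fun _ : Ω => (1:ℝ)) ∈ o)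
    {A B : Set Ω} (hA : IsObsSet o A) (hB : IsObsSet o B) (hd : A ∩ B = ∅)
    (hAB : IsObsSet o (A ∪ B)) :
    Pv o E (A ∪ B) = Pv o E A + Pv o E B := by
  rcases hA with hzA | hcA
  · rcases hB with hzB | hcB
    · -- zero-zero
      have hzu : IsZeroSet o (A ∪ B) := zero_union hO hzA hzB
      rw [Pzero hO hql hpos hnorm h1 hzu, Pzero hO hql hpos hnorm h1 hzA,
        Pzero hO hql hpos hnorm h1 hzB, Set.compl_union]
      have hid := id2 hO hql hpos hnorm h1 hzA hzB hd
      linarith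
    · exact padd_zc hO hql hpos hnorm h1 hzA hcB hd hAB
  · rcases hB with hzB | hcB
    · have := padd_zc hO hql hpos hnorm h1 (A := B) (B := A) hzB hcA
        (by rw [Set.inter_comm]; exact hd) (by rw [Set.union_comm]; exact hAB)
      rw [Set.union_comm B A] at this
      linarith
    · have hcu := cozero_union hO hcA hcB
      rw [Pco hcu, Pco hcA, Pco hcB]
      exact id1 hO hql hpos hnorm h1 hcA hcB hd

lemma pregularity (hO : IsObsAlg o) (hql : QuasiLinear o E) (hpos : PositiveFunc o E)
    (hnorm : E (fun _ => 1) = 1) (h1 : (fun _ : Ω => (1:ℝ)) ∈ o)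
    {U : Set Ω} (hU : IsCozeroSet o U) :
    Pv o E U = sSup {r | ∃ F : Set Ω, IsZeroSet o F ∧ F ⊆ U ∧ r = Pv o E F} := by
  rw [Pco hU]
  have hTb : ∀ r ∈ {r | ∃ F : Set Ω, IsZeroSet o F ∧ F ⊆ U ∧ r = Pv o E F}, r ≤ 1 := by
    rintro r ⟨F, hF, hFU, rfl⟩
    rw [Pzero hO hql hpos hnorm h1 hF]
    have := Sv_nonneg hO hql hpos hnorm h1 Fᶜ
    linarith
  have hT0 : (0:ℝ) ∈ {r | ∃ F : Set Ω, IsZeroSet o F ∧ F ⊆ U ∧ r = Pv o E F} := by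
    refine ⟨∅, zero_empty hO h1, Set.empty_subset _, ?_⟩
    rw [Pzero hO hql hpos hnorm h1 (zero_empty hO h1), Set.compl_empty,
      Sv_univ hO hql hpos hnorm h1]
    ring
  apply le_antisymm
  · refine Sv_le_of_adm hO hql hpos (le_csSup ⟨1, hTb⟩ hT0) (fun X u ha => ?_)
    obtain ⟨hXb, hub, hX01, hu0, huU, husupp⟩ := ha
    have hFz : IsZeroSet o {ω | u ω = 0} := mkZero hub.1
    have hbound : ∀ r2 ∈ Sset o E ({ω | u ω = 0}ᶜ), E X + r2 ≤ 1 := by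
      intro r2 hr2
      obtain ⟨Y, v, haY, hleY⟩ := sset_elim hO hql hpos hr2
      obtain ⟨hYb, hvb, hY01, hv0, hvF, hvsupp⟩ := haY
      have horth : ∀ ω, X ω = 0 ∨ Y ω = 0 := by
        intro ω
        by_cases hu : u ω = 0
        · right
          refine hvsupp ω (fun hv => ?_)
          exact (hvF ω hv) (show ω ∈ {ω | u ω = 0} from hu)
        · left; exact husupp ω hu
      have hadd := oa hO hql hXb hYb (fun ω => (hX01 ω).1) (fun ω => (hY01 ω).1) horth
      have hsb : MemBdd o (fun ω => X ω + Y ω) := by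
        refine ⟨mem2 hO hXb.1 hYb.1 (fun x y => x + y) (fun ω => by fun_prop), 1, fun ω => ?_⟩
        show |X ω + Y ω| ≤ 1
        rw [abs_le]
        rcases horth ω with h | h <;> rw [h]
        · simp only [zero_add]
          constructor <;> linarith [(hY01 ω).1, (hY01 ω).2]
        · simp only [add_zero]
          constructor <;> linarith [(hX01 ω).1, (hX01 ω).2]
      have hle1 : E (fun ω => X ω + Y ω) ≤ 1 := by
        refine ele1 hO hql hpos hnorm hsb (fun ω => ?_)
        show X ω + Y ω ≤ 1
        rcases horth ω with h | h <;> rw [h]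
        · simp only [zero_add]; linarith [(hY01 ω).2]
        · simp only [add_zero]; linarith [(hX01 ω).2]
      linarith
    have hEX1 : E X ≤ 1 := by
      have := hbound 0 (sset_zero_mem hO hql hnorm h1)
      linarith
    have hSvF : Sv o E ({ω | u ω = 0}ᶜ) ≤ 1 - E X :=
      Real.sSup_le (fun r2 hr2 => by linarith [hbound r2 hr2]) (by linarith)
    have hmemT : 1 - Sv o E ({ω | u ω = 0}ᶜ)
        ∈ {r | ∃ F : Set Ω, IsZeroSet o F ∧ F ⊆ U ∧ r = Pv o E F} :=
      ⟨{ω | u ω = 0}, hFz, fun ω hω => huU ω hω,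
        (Pzero hO hql hpos hnorm h1 hFz).symm⟩
    calc E X ≤ 1 - Sv o E ({ω | u ω = 0}ᶜ) := by linarith
      _ ≤ sSup {r | ∃ F : Set Ω, IsZeroSet o F ∧ F ⊆ U ∧ r = Pv o E F} :=
        le_csSup ⟨1, hTb⟩ hmemT
  · refine Real.sSup_le ?_ (Sv_nonneg hO hql hpos hnorm h1 U)
    rintro r ⟨F, hF, hFU, rfl⟩
    rw [Pzero hO hql hpos hnorm h1 hF]
    have hUz : IsZeroSet o Uᶜ := hU
    have hdis : Uᶜ ∩ F = ∅ := by
      ext ω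
      simp only [Set.mem_inter_iff, Set.mem_compl_iff, Set.mem_empty_iff_false, iff_false]
      intro h
      exact h.1 (hFU h.2)
    have hid := id2_ge hO hql hpos hnorm h1 hUz hF hdis
    rw [compl_compl] at hid
    have h0 := Sv_nonneg hO hql hpos hnorm h1 (U ∩ Fᶜ)
    linarith

end assemble

end QAED

/-- a quasi-additive expectation determines a unique quasi-additive
probability via `P U = sup {E X : X ⪯ U}` on co-zero sets. -/
theorem quasiAdditive_expectation_determines_prob {Ω : Type*} [Nonempty Ω]
    (o : Set (Ω → ℝ)) (hO : IsObsAlg o) (E : (Ω → ℝ) → ℝ)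
    (hql : QuasiLinear o E) (hpos : PositiveFunc o E) (hnorm : E (fun _ => 1) = 1) :
    ∃ P : Set Ω → ℝ,
      (IsQuasiAddProb o P ∧ ∀ U : Set Ω, IsCozeroSet o U →
        P U = sSup {r | ∃ X : Ω → ℝ, MemBdd o X ∧ PrecU o X U ∧ r = E X}) ∧
      ∀ Q : Set Ω → ℝ,
        (IsQuasiAddProb o Q ∧ ∀ U : Set Ω, IsCozeroSet o U →
          Q U = sSup {r | ∃ X : Ω → ℝ, MemBdd o X ∧ PrecU o X U ∧ r = E X}) →
        ∀ A : Set Ω, IsObsSet o A → Q A = P A := by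
  classical
  by_cases h1 : (fun _ : Ω => (1:ℝ)) ∈ o
  · -- main case
    refine ⟨QAED.Pv o E, ⟨⟨?_, ?_, ?_, ?_⟩, fun U hU => QAED.Pco hU⟩, ?_⟩
    · -- additivity
      intro A B hA hB hd hAB
      exact QAED.padd hO hql hpos hnorm h1 hA hB
        (Set.disjoint_iff_inter_eq_empty.mp hd) hAB
    · -- nonnegativity
      intro A hA
      rcases hA with hz | hc
      · rw [QAED.Pzero hO hql hpos hnorm h1 hz]
        have := QAED.Sv_le_one hO hql hpos hnorm (U := Aᶜ)
        linarith
      · rw [QAED.Pco hc]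
        exact QAED.Sv_nonneg hO hql hpos hnorm h1 A
    · -- normalization
      rw [QAED.Pco (QAED.cozero_univ hO h1)]
      exact QAED.Sv_univ hO hql hpos hnorm h1
    · -- inner regularity (IV')
      intro U hU
      exact QAED.pregularity hO hql hpos hnorm h1 hU
    · -- uniqueness
      rintro Q ⟨⟨hQadd, hQpos, hQnorm, hQreg⟩, hQform⟩ A hA
      rcases hA with hz | hc
      · have hobsA : IsObsSet o A := Or.inl hz
        have hcAc : IsCozeroSet o Aᶜ := by
          unfold IsCozeroSet
          rw [compl_compl]
          exact hz
        have hobsAc : IsObsSet o Aᶜ := Or.inr hcAc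
        have hobsU : IsObsSet o (A ∪ Aᶜ) := by
          rw [Set.union_compl_self]
          exact Or.inl (QAED.zero_univ hO h1)
        have hadd := hQadd A Aᶜ hobsA hobsAc disjoint_compl_right hobsU
        rw [Set.union_compl_self, hQnorm] at hadd
        have hQAc : Q Aᶜ = QAED.Sv o E Aᶜ := hQform Aᶜ hcAc
        rw [QAED.Pzero hO hql hpos hnorm h1 hz]
        linarith
      · have h1' := hQform A hc
        have h2' : QAED.Pv o E A = QAED.Sv o E A := QAED.Pco hc
        rw [h1', h2']
        rfl
  · -- degenerate case : `o` is empty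
    have hno : ∀ X : Ω → ℝ, X ∉ o := by
      intro X hX
      exact h1 (QAED.mem1 hO hX (fun _ => 1) continuous_const)
    have hnozero : ∀ A : Set Ω, ¬ IsZeroSet o A := by
      rintro A ⟨X, hX, -⟩
      exact hno X hX
    have hnoobs : ∀ A : Set Ω, ¬ IsObsSet o A := by
      rintro A (hz | hc)
      · exact hnozero A hz
      · exact hnozero Aᶜ hc
    refine ⟨fun _ => 1, ⟨⟨?_, ?_, rfl, ?_⟩, ?_⟩, ?_⟩
    · intro A B hA _ _ _
      exact absurd hA (hnoobs A)
    · intro A hA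
      exact absurd hA (hnoobs A)
    · intro U hU
      exact absurd hU (hnozero Uᶜ)
    · intro U hU
      exact absurd hU (hnozero Uᶜ)
    · intro Q _ A hA
      exact absurd hA (hnoobs A)
end

section
/- Let 𝒪 be an algebra of observables on a nonempty set Ω, let E be an observable expectation on 𝒪^∞, let U be a co-zero set, and let Xᵢ ∈ 𝒪^∞ be a sequence increasing pointwise with pointwise limit 1_U. Then lim_i E[Xᵢ] = sup{E[X] : X ∈ 𝒪^∞, X ≤ 1_U pointwise}. -/
open Filter MeasureTheory Topology

variable {Ω : Type*}

lemma obs_comp1 {o : Set (Ω → ℝ)} (hO : IsObsAlg o) {X : Ω → ℝ} (hX : X ∈ o)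
    (φ : ℝ → ℝ) (hφ : Continuous φ) : (fun ω => φ (X ω)) ∈ o := by
  have := hO 1 one_pos (fun _ => X) (fun _ => hX) (fun p => φ (p 0))
    ((hφ.comp (continuous_apply 0)).continuousOn)
  simpa using this

lemma obs_comp2 {o : Set (Ω → ℝ)} (hO : IsObsAlg o) {X Y : Ω → ℝ} (hX : X ∈ o) (hY : Y ∈ o)
    (φ : ℝ → ℝ → ℝ) (hφ : Continuous fun p : ℝ × ℝ => φ p.1 p.2) :
    (fun ω => φ (X ω) (Y ω)) ∈ o := by
  have hpair : Continuous (fun p : Fin 2 → ℝ => ((p 0 : ℝ), (p 1 : ℝ))) :=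
    (continuous_apply _).prodMk (continuous_apply _)
  have hc : Continuous (fun p : Fin 2 → ℝ => φ (p 0) (p 1)) := by exact hφ.comp hpair
  have hmem : ∀ i : Fin 2, ![X, Y] i ∈ o := by
    intro i
    match i with
    | 0 => exact hX
    | 1 => exact hY
  have := hO 2 two_pos ![X, Y] hmem (fun p => φ (p 0) (p 1)) hc.continuousOn
  simpa using this

lemma obs_const {o : Set (Ω → ℝ)} (hO : IsObsAlg o) {W : Ω → ℝ} (hW : W ∈ o) (c : ℝ) :
    (fun _ : Ω => c) ∈ o := by
  have := obs_comp1 hO hW (fun _ => c) continuous_const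
  simpa using this

lemma E_const {o : Set (Ω → ℝ)} {E : (Ω → ℝ) → ℝ} (hO : IsObsAlg o) (hQL : QuasiLinear o E)
    (hnorm : E (fun _ => 1) = 1) {W : Ω → ℝ} (hW : W ∈ o) (c : ℝ) :
    E (fun _ : Ω => c) = c := by
  have h1 : (fun _ : Ω => (1:ℝ)) ∈ o := obs_const hO hW 1
  have hm : MemBdd o (fun _ : Ω => (1:ℝ)) := ⟨h1, 1, fun ω => by norm_num⟩
  have hmem : (fun _ : Ω => (1:ℝ)) ∈ ClosedAlg (fun _ : Ω => (1:ℝ)) :=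
    ⟨id, continuous_id, rfl⟩
  have h := hQL _ hm _ hmem _ hmem c 0
  rw [hnorm] at h
  have e : (fun ω : Ω => c * (fun _ : Ω => (1:ℝ)) ω + 0 * (fun _ : Ω => (1:ℝ)) ω)
      = (fun _ : Ω => c) := by funext ω; simp
  rw [e] at h
  linarith

/-- The key cross-algebra comparison: if `0 ≤ g ≤ δ`, `0 ≤ h ≤ δ` and `h = δ` on the
support of `g`, then `E g ≤ E h`. -/
lemma E_key {o : Set (Ω → ℝ)} {E : (Ω → ℝ) → ℝ} (hO : IsObsAlg o) (hQL : QuasiLinear o E)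
    (hpos : PositiveFunc o E) (hnorm : E (fun _ => 1) = 1)
    {δ : ℝ} (hδ : 0 < δ) {g h : Ω → ℝ} (hgo : g ∈ o) (hho : h ∈ o)
    (hg0 : ∀ ω, 0 ≤ g ω) (hgδ : ∀ ω, g ω ≤ δ)
    (hh0 : ∀ ω, 0 ≤ h ω) (hhδ : ∀ ω, h ω ≤ δ)
    (hcut : ∀ ω, 0 < g ω → h ω = δ) : E g ≤ E h := by
  set D : Ω → ℝ := fun ω => g ω - (δ - h ω) with hDdef
  have hDo : D ∈ o :=
    obs_comp2 hO hgo hho (fun x y => x - (δ - y))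
      (continuous_fst.sub (continuous_const.sub continuous_snd))
  have hDb : MemBdd o D := by
    refine ⟨hDo, δ, fun ω => abs_le.mpr ⟨?_, ?_⟩⟩
    · have := hg0 ω; have := hh0 ω; simp only [hDdef]; linarith
    · have := hgδ ω; have := hhδ ω; simp only [hDdef]; linarith
  have hgD : g = (fun t => max t 0) ∘ D := by
    funext ω
    rcases (hg0 ω).lt_or_eq with hp | hp
    · have hc := hcut ω hp
      simp only [Function.comp, hDdef, hc, sub_self, sub_zero]
      exact (max_eq_left (le_of_lt hp)).symm
    · have hD0 : D ω ≤ 0 := by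
        simp only [hDdef, ← hp]; have := hhδ ω; linarith
      simp only [Function.comp, ← hp]
      exact (max_eq_right hD0).symm
  have hvD : (fun ω => δ - h ω) = (fun t => max (-t) 0) ∘ D := by
    funext ω
    rcases (hg0 ω).lt_or_eq with hp | hp
    · have hc := hcut ω hp
      simp only [Function.comp, hDdef, hc, sub_self, sub_zero]
      rw [max_eq_right (by linarith)]
    · have hD0 : D ω = -(δ - h ω) := by simp only [hDdef, ← hp]; ring
      simp only [Function.comp, hD0, neg_neg]
      rw [max_eq_left (by have := hhδ ω; linarith)]
  have habs : (fun ω => g ω + (δ - h ω)) = (fun t => |t|) ∘ D := by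
    funext ω
    rcases (hg0 ω).lt_or_eq with hp | hp
    · have hc := hcut ω hp
      simp only [Function.comp, hDdef, hc, sub_self, sub_zero]
      rw [abs_of_nonneg (le_of_lt hp)]
      ring
    · have hD0 : D ω = -(δ - h ω) := by simp only [hDdef, ← hp]; ring
      simp only [Function.comp, hD0, abs_neg, ← hp]
      rw [abs_of_nonneg (by have := hhδ ω; linarith)]
      ring
  -- additivity of the two orthogonal parts
  have hgC : g ∈ ClosedAlg D := ⟨_, continuous_id.max continuous_const, hgD⟩
  have hvC : (fun ω => δ - h ω) ∈ ClosedAlg D :=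
    ⟨_, continuous_neg.max continuous_const, hvD⟩
  have hQ := hQL D hDb g hgC _ hvC 1 1
  have e1 : (fun ω => 1 * g ω + 1 * (fun ω' => δ - h ω') ω)
      = (fun ω => g ω + (δ - h ω)) := by funext ω; ring
  rw [e1] at hQ
  -- E of the sum is at most δ
  have hsum_o : (fun ω => g ω + (δ - h ω)) ∈ o :=
    obs_comp2 hO hgo hho (fun x y => x + (δ - y))
      (continuous_fst.add (continuous_const.sub continuous_snd))
  have hsum_mem : (fun ω => g ω + (δ - h ω)) ∈ ClosedAlg D := ⟨_, continuous_abs, habs⟩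
  have hone_mem : (fun _ : Ω => (1:ℝ)) ∈ ClosedAlg D := ⟨fun _ => 1, continuous_const, rfl⟩
  have hQ2 := hQL D hDb _ hone_mem _ hsum_mem δ (-1)
  rw [hnorm] at hQ2
  have e2 : (fun ω => δ * (fun _ : Ω => (1:ℝ)) ω + (-1) * (fun ω' => g ω' + (δ - h ω')) ω)
      = (fun ω => h ω - g ω) := by funext ω; ring
  rw [e2] at hQ2
  have hdiff_o : (fun ω => h ω - g ω) ∈ o :=
    obs_comp2 hO hho hgo (fun x y => x - y) (continuous_fst.sub continuous_snd)
  have hdiff_pos : 0 ≤ E (fun ω => h ω - g ω) := by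
    refine hpos _ ⟨hdiff_o, δ, fun ω => abs_le.mpr ⟨?_, ?_⟩⟩ ?_
    · show -δ ≤ h ω - g ω
      have := hh0 ω; have := hgδ ω; linarith
    · show h ω - g ω ≤ δ
      have := hhδ ω; have := hg0 ω; linarith
    · intro ω
      show (0:ℝ) ≤ h ω - g ω
      rcases (hg0 ω).lt_or_eq with hp | hp
      · have hc := hcut ω hp; have := hgδ ω; linarith
      · have := hh0 ω; linarith
  -- E (δ - h) = δ - E h
  have hhb : MemBdd o h := ⟨hho, δ, fun ω => abs_le.mpr ⟨by have := hh0 ω; linarith, hhδ ω⟩⟩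
  have hidh : h ∈ ClosedAlg h := ⟨id, continuous_id, rfl⟩
  have honeh : (fun _ : Ω => (1:ℝ)) ∈ ClosedAlg h := ⟨fun _ => 1, continuous_const, rfl⟩
  have hQ3 := hQL h hhb _ honeh h hidh δ (-1)
  rw [hnorm] at hQ3
  have e3 : (fun ω => δ * (fun _ : Ω => (1:ℝ)) ω + (-1) * h ω)
      = (fun ω => δ - h ω) := by funext ω; ring
  rw [e3] at hQ3
  linarith

lemma E_sum {o : Set (Ω → ℝ)} {E : (Ω → ℝ) → ℝ} (hO : IsObsAlg o) (hQL : QuasiLinear o E)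
    (hnorm : E (fun _ => 1) = 1) {X : Ω → ℝ} (hX : MemBdd o X)
    (φ : ℕ → ℝ → ℝ) (hφ : ∀ k, Continuous (φ k)) : ∀ m : ℕ,
    E (fun ω => ∑ k ∈ Finset.range m, φ k (X ω))
      = ∑ k ∈ Finset.range m, E (fun ω => φ k (X ω)) := by
  intro m
  induction m with
  | zero =>
      simp only [Finset.range_zero, Finset.sum_empty]
      exact E_const hO hQL hnorm hX.1 0
  | succ m ih =>
      have hmem1 : (fun ω => ∑ k ∈ Finset.range m, φ k (X ω)) ∈ ClosedAlg X :=
        ⟨fun t => ∑ k ∈ Finset.range m, φ k t,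
          continuous_finset_sum _ (fun k _ => hφ k), rfl⟩
      have hmem2 : (fun ω => φ m (X ω)) ∈ ClosedAlg X := ⟨φ m, hφ m, rfl⟩
      have hq := hQL X hX _ hmem1 _ hmem2 1 1
      have e : (fun ω => 1 * (fun ω' => ∑ k ∈ Finset.range m, φ k (X ω')) ω
          + 1 * (fun ω' => φ m (X ω')) ω)
          = (fun ω => ∑ k ∈ Finset.range (m+1), φ k (X ω)) := by
        funext ω; simp [Finset.sum_range_succ]
      rw [e] at hq
      rw [hq, ih, Finset.sum_range_succ]
      ring

lemma E_decomp {o : Set (Ω → ℝ)} {E : (Ω → ℝ) → ℝ} (hO : IsObsAlg o) (hQL : QuasiLinear o E)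
    (hnorm : E (fun _ => 1) = 1) {X : Ω → ℝ} (hX : MemBdd o X)
    (φ : ℕ → ℝ → ℝ) (hφ : ∀ k, Continuous (φ k)) (c : ℝ) (m : ℕ) :
    E (fun ω => c + ∑ k ∈ Finset.range m, φ k (X ω))
      = c + ∑ k ∈ Finset.range m, E (fun ω => φ k (X ω)) := by
  have hmem1 : (fun ω => ∑ k ∈ Finset.range m, φ k (X ω)) ∈ ClosedAlg X :=
    ⟨fun t => ∑ k ∈ Finset.range m, φ k t, continuous_finset_sum _ (fun k _ => hφ k), rfl⟩
  have hone : (fun _ : Ω => (1:ℝ)) ∈ ClosedAlg X := ⟨fun _ => 1, continuous_const, rfl⟩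
  have hq := hQL X hX _ hmem1 _ hone 1 c
  rw [hnorm] at hq
  have e : (fun ω => 1 * (fun ω' => ∑ k ∈ Finset.range m, φ k (X ω')) ω
      + c * (fun _ : Ω => (1:ℝ)) ω)
      = (fun ω => c + ∑ k ∈ Finset.range m, φ k (X ω)) := by funext ω; ring
  rw [e] at hq
  rw [hq, E_sum hO hQL hnorm hX φ hφ m]
  ring

lemma min_max_step (s a ε : ℝ) (ha : 0 ≤ a) (hε : 0 ≤ ε) :
    min (max s 0) a + min (max (s - a) 0) ε = min (max s 0) (a + ε) := by
  rcases le_total s 0 with h0 | h0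
  · rw [max_eq_right h0, max_eq_right (by linarith)]
    rw [min_eq_left ha, min_eq_left hε, min_eq_left (by linarith)]
    ring
  · rw [max_eq_left h0]
    rcases le_total s a with hsa | hsa
    · rw [min_eq_left hsa, max_eq_right (by linarith), min_eq_left hε,
        min_eq_left (by linarith)]
      ring
    · rw [min_eq_right hsa, max_eq_left (by linarith)]
      rcases le_total (s - a) ε with hse | hse
      · rw [min_eq_left hse, min_eq_left (by linarith)]
        ring
      · rw [min_eq_right hse, min_eq_right (by linarith)]

/-- Monotonicity of a quasi-linear positive normalized functional. -/
lemma E_mono [Nonempty Ω] {o : Set (Ω → ℝ)} {E : (Ω → ℝ) → ℝ} (hO : IsObsAlg o)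
    (hQL : QuasiLinear o E) (hpos : PositiveFunc o E) (hnorm : E (fun _ => 1) = 1)
    {X Y : Ω → ℝ} (hX : MemBdd o X) (hY : MemBdd o Y) (hle : ∀ ω, X ω ≤ Y ω) :
    E X ≤ E Y := by
  obtain ⟨hXo, MX, hMX⟩ := hX
  obtain ⟨hYo, MY, hMY⟩ := hY
  set M : ℝ := max MX MY with hMdef
  obtain ⟨ω₀⟩ := ‹Nonempty Ω›
  have hM0 : 0 ≤ M := le_trans (abs_nonneg (X ω₀)) (le_trans (hMX ω₀) (le_max_left _ _))
  have hXlb : ∀ ω, -M ≤ X ω := fun ω => by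
    have := abs_le.mp (hMX ω); have : -MX ≤ X ω := this.1
    have := le_max_left MX MY; linarith
  have hXub : ∀ ω, X ω ≤ M := fun ω => by
    have := (abs_le.mp (hMX ω)).2; have := le_max_left MX MY; linarith
  have hYlb : ∀ ω, -M ≤ Y ω := fun ω => by
    have := (abs_le.mp (hMY ω)).1; have := le_max_right MX MY; linarith
  have hYub : ∀ ω, Y ω ≤ M := fun ω => by
    have := (abs_le.mp (hMY ω)).2; have := le_max_right MX MY; linarith
  refine le_of_forall_pos_le_add ?_
  intro ε hε
  obtain ⟨m, hm⟩ := exists_nat_ge (2 * M / ε)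
  have hm' : 2 * M ≤ m * ε := by
    rw [div_le_iff₀ hε] at hm; linarith
  set f : ℕ → ℝ → ℝ := fun k t => min (max (t - (-M + k * ε)) 0) ε with hfdef
  have hfc : ∀ k, Continuous (f k) :=
    fun k => ((continuous_id.sub continuous_const).max continuous_const).min continuous_const
  have hf0 : ∀ k t, 0 ≤ f k t := fun k t => le_min (le_max_right _ _) hε.le
  have hfε : ∀ k t, f k t ≤ ε := fun k t => min_le_right _ _
  have hsum : ∀ t, ∀ n : ℕ, ∑ k ∈ Finset.range n, f k t = min (max (t + M) 0) (n * ε) := by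
    intro t n
    induction n with
    | zero =>
        simp only [Finset.range_zero, Finset.sum_empty, Nat.cast_zero, zero_mul]
        exact (min_eq_right (le_max_right _ _)).symm
    | succ n ih =>
        rw [Finset.sum_range_succ, ih]
        have e1 : t - (-M + (n:ℝ) * ε) = (t + M) - n * ε := by ring
        have e2 : ((n:ℕ)+1 : ℕ) = (n+1 : ℕ) := rfl
        have : f n t = min (max ((t + M) - (n:ℝ) * ε) 0) ε := by
          simp only [hfdef, e1]
        rw [this, min_max_step (t + M) ((n:ℝ) * ε) ε (by positivity) hε.le]
        push_cast
        ring_nf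
  have hXid : X = fun ω => -M + ∑ k ∈ Finset.range m, f k (X ω) := by
    funext ω
    rw [hsum (X ω) m, max_eq_left (by have := hXlb ω; linarith),
      min_eq_left (by have := hXub ω; linarith)]
    ring
  have hYid : Y = fun ω => -M + ∑ k ∈ Finset.range m, f k (Y ω) := by
    funext ω
    rw [hsum (Y ω) m, max_eq_left (by have := hYlb ω; linarith),
      min_eq_left (by have := hYub ω; linarith)]
    ring
  have hXb' : MemBdd o X := ⟨hXo, MX, hMX⟩
  have hYb' : MemBdd o Y := ⟨hYo, MY, hMY⟩
  have hEX : E X = -M + ∑ k ∈ Finset.range m, E (fun ω => f k (X ω)) := by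
    conv_lhs => rw [hXid]
    exact E_decomp hO hQL hnorm hXb' f hfc (-M) m
  have hEY : E Y = -M + ∑ k ∈ Finset.range m, E (fun ω => f k (Y ω)) := by
    conv_lhs => rw [hYid]
    exact E_decomp hO hQL hnorm hYb' f hfc (-M) m
  -- layer inequalities
  have hA0 : E (fun ω => f 0 (X ω)) ≤ ε := by
    have hkey := E_key hO hQL hpos hnorm hε
      (g := fun ω => f 0 (X ω)) (h := fun _ : Ω => ε)
      (obs_comp1 hO hXo (f 0) (hfc 0)) (obs_const hO hXo ε)
      (fun ω => hf0 0 (X ω)) (fun ω => hfε 0 (X ω))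
      (fun _ => hε.le) (fun _ => le_refl ε) (fun ω _ => rfl)
    rwa [E_const hO hQL hnorm hXo ε] at hkey
  have hAB : ∀ k : ℕ, E (fun ω => f (k+1) (X ω)) ≤ E (fun ω => f k (Y ω)) := by
    intro k
    refine E_key hO hQL hpos hnorm hε
      (obs_comp1 hO hXo (f (k+1)) (hfc (k+1))) (obs_comp1 hO hYo (f k) (hfc k))
      (fun ω => hf0 _ _) (fun ω => hfε _ _) (fun ω => hf0 _ _) (fun ω => hfε _ _) ?_
    intro ω hp
    have h1 : -M + ((k:ℝ)+1) * ε < X ω := by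
      by_contra hcon
      push_neg at hcon
      have : f (k+1) (X ω) = 0 := by
        simp only [hfdef]
        rw [max_eq_right (by push_cast; linarith), min_eq_left hε.le]
      rw [this] at hp; exact lt_irrefl 0 hp
    have h2 : X ω ≤ Y ω := hle ω
    simp only [hfdef]
    rw [max_eq_left (by push_cast at h1 ⊢; linarith), min_eq_right (by push_cast at h1 ⊢; linarith)]
  have hB0 : ∀ k : ℕ, 0 ≤ E (fun ω => f k (Y ω)) := by
    intro k
    refine hpos _ ⟨obs_comp1 hO hYo (f k) (hfc k), ε, fun ω => abs_le.mpr
      ⟨by have := hf0 k (Y ω); linarith, hfε k (Y ω)⟩⟩ (fun ω => hf0 k (Y ω))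
  have hsum_le : ∑ k ∈ Finset.range m, E (fun ω => f k (X ω))
      ≤ ε + ∑ k ∈ Finset.range m, E (fun ω => f k (Y ω)) := by
    cases m with
    | zero => simpa using hε.le
    | succ m' =>
        rw [Finset.sum_range_succ' (fun k => E (fun ω => f k (X ω))) m']
        have h1 : ∑ k ∈ Finset.range m', E (fun ω => f (k+1) (X ω))
            ≤ ∑ k ∈ Finset.range m', E (fun ω => f k (Y ω)) :=
          Finset.sum_le_sum (fun k _ => hAB k)
        have h2 : ∑ k ∈ Finset.range m', E (fun ω => f k (Y ω))
            ≤ ∑ k ∈ Finset.range (m'+1), E (fun ω => f k (Y ω)) := by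
          rw [Finset.sum_range_succ]
          have := hB0 m'; linarith
        linarith
  linarith

/-- if `Xᵢ ∈ 𝒪^∞` increase pointwise to the indicator of a co-zero set
`U`, then `lim E[Xᵢ] = sup {E X : X ∈ 𝒪^∞, X ≤ 1_U}`. -/
theorem lim_eq_sup_of_increasing_to_indicator {Ω : Type*} [Nonempty Ω]
    (o : Set (Ω → ℝ)) (hO : IsObsAlg o) (E : (Ω → ℝ) → ℝ) (hE : IsObsExp o E)
    (U : Set Ω) (hU : IsCozeroSet o U)
    (Xs : ℕ → Ω → ℝ) (hXs : ∀ n, MemBdd o (Xs n))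
    (hmono : ∀ n ω, Xs n ω ≤ Xs (n + 1) ω)
    (hlim : ∀ ω, Tendsto (fun n => Xs n ω) atTop
      (𝓝 (U.indicator (fun _ => (1:ℝ)) ω))) :
    Tendsto (fun n => E (Xs n)) atTop
      (𝓝 (sSup {r | ∃ X : Ω → ℝ, MemBdd o X ∧
        (∀ ω, X ω ≤ U.indicator (fun _ => (1:ℝ)) ω) ∧ r = E X})) := by
  classical
  obtain ⟨hQL, hpos, hnorm, hMC⟩ := hE
  have hXsmono : ∀ ω, Monotone fun n => Xs n ω :=
    fun ω => monotone_nat_of_le_succ (fun n => hmono n ω)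
  have hle1U : ∀ n ω, Xs n ω ≤ U.indicator (fun _ => (1:ℝ)) ω :=
    fun n ω => (hXsmono ω).ge_of_tendsto (hlim ω) n
  have hind1 : ∀ ω, U.indicator (fun _ => (1:ℝ)) ω ≤ 1 := by
    intro ω; by_cases hω : ω ∈ U <;> simp [hω]
  have h1o : (fun _ : Ω => (1:ℝ)) ∈ o := obs_const hO (hXs 0).1 1
  have h1b : MemBdd o (fun _ : Ω => (1:ℝ)) := ⟨h1o, 1, by intro ω; norm_num⟩
  have hEle1 : ∀ X : Ω → ℝ, MemBdd o X →
      (∀ ω, X ω ≤ U.indicator (fun _ => (1:ℝ)) ω) → E X ≤ 1 := by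
    intro X hX hle
    have h := E_mono hO hQL hpos hnorm hX h1b (fun ω => le_trans (hle ω) (hind1 ω))
    rwa [hnorm] at h
  set S := {r | ∃ X : Ω → ℝ, MemBdd o X ∧
    (∀ ω, X ω ≤ U.indicator (fun _ => (1:ℝ)) ω) ∧ r = E X} with hSdef
  have hSne : S.Nonempty := ⟨E (Xs 0), ⟨Xs 0, hXs 0, hle1U 0, rfl⟩⟩
  have hSbdd : BddAbove S := ⟨1, by rintro r ⟨X, hX, hle, rfl⟩; exact hEle1 X hX hle⟩
  have hmonoE : Monotone fun n => E (Xs n) :=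
    monotone_nat_of_le_succ (fun n => E_mono hO hQL hpos hnorm (hXs n) (hXs (n+1)) (hmono n))
  have hrbdd : BddAbove (Set.range fun n => E (Xs n)) :=
    ⟨1, by rintro r ⟨n, rfl⟩; exact hEle1 _ (hXs n) (hle1U n)⟩
  have htend : Tendsto (fun n => E (Xs n)) atTop (𝓝 (⨆ n, E (Xs n))) :=
    tendsto_atTop_ciSup hmonoE hrbdd
  have hLle : (⨆ n, E (Xs n)) ≤ sSup S :=
    ciSup_le (fun n => le_csSup hSbdd ⟨Xs n, hXs n, hle1U n, rfl⟩)
  have hSle : sSup S ≤ ⨆ n, E (Xs n) := by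
    refine csSup_le hSne ?_
    rintro r ⟨X, hX, hle, rfl⟩
    set Z : ℕ → Ω → ℝ := fun n ω => min (X ω) (Xs n ω) with hZdef
    have hZmem : ∀ n, MemBdd o (Z n) := by
      intro n
      obtain ⟨MX, hMX⟩ := hX.2
      obtain ⟨Mn, hMn⟩ := (hXs n).2
      refine ⟨obs_comp2 hO hX.1 (hXs n).1 (fun x y => min x y)
        (continuous_fst.min continuous_snd), max MX Mn, ?_⟩
      intro ω
      show |min (X ω) (Xs n ω)| ≤ max MX Mn
      rcases min_cases (X ω) (Xs n ω) with ⟨he, _⟩ | ⟨he, _⟩ <;> rw [he]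
      · exact le_trans (hMX ω) (le_max_left _ _)
      · exact le_trans (hMn ω) (le_max_right _ _)
    have hZmono : ∀ n ω, Z n ω ≤ Z (n+1) ω :=
      fun n ω => min_le_min (le_refl _) (hmono n ω)
    have hZlim : ∀ ω, Tendsto (fun n => Z n ω) atTop (𝓝 (X ω)) := by
      intro ω
      have h : Tendsto (fun n : ℕ => min (X ω) (Xs n ω)) atTop
          (𝓝 (min (X ω) (U.indicator (fun _ => (1:ℝ)) ω))) :=
        Filter.Tendsto.min tendsto_const_nhds (hlim ω)
      rwa [min_eq_left (hle ω)] at h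
    have hEZ := hMC Z X hZmem hX hZmono hZlim
    refine le_of_tendsto' hEZ ?_
    intro n
    exact le_trans
      (E_mono hO hQL hpos hnorm (hZmem n) (hXs n) (fun ω => min_le_right _ _))
      (le_ciSup hrbdd n)
  have hfin : sSup S = ⨆ n, E (Xs n) := le_antisymm hSle hLle
  rw [hfin]
  exact htend
end

section
/- Let Ω be a nonempty set and let ℱ_U be a family of subsets of Ω containing ∅ and closed under finite intersections and countable unions (a σ-quasi-algebra). Then the family 𝒪 of all measurable functions X : Ω → ℝ, i.e. those with X⁻¹(U) ∈ ℱ_U for every open set U ⊆ ℝ, is an algebra of observables on Ω: for every n ≥ 1, all measurable X₁, …, Xₙ and every continuous φ : S → ℝ, where S = {(X₁(ω), …, Xₙ(ω)) : ω ∈ Ω} ⊆ ℝⁿ, the function ω ↦ φ(X₁(ω), …, Xₙ(ω)) is measurable. -/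
open Filter MeasureTheory Topology

variable {Ω : Type*}

/-- the measurable functions on a quasi-measurable space form an
algebra of observables. -/
theorem measurable_functions_isObsAlg {Ω : Type*} [Nonempty Ω]
    (f : Set (Set Ω)) (hempty : ∅ ∈ f)
    (hinter : ∀ A ∈ f, ∀ B ∈ f, A ∩ B ∈ f)
    (hunion : ∀ U : ℕ → Set Ω, (∀ i, U i ∈ f) → (⋃ i, U i) ∈ f) :
    IsObsAlg {X : Ω → ℝ | ∀ U : Set ℝ, IsOpen U → X ⁻¹' U ∈ f} := by
  classical
  intro n hn X hX φ hφ
  set g : Ω → (Fin n → ℝ) := fun ω i => X i ω with hg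
  have huniv : (Set.univ : Set Ω) ∈ f := by
    have := hX ⟨0, hn⟩ Set.univ isOpen_univ
    simpa using this
  have hInter : ∀ (m : ℕ) (A : Fin m → Set Ω), (∀ i, A i ∈ f) → (⋂ i, A i) ∈ f := by
    intro m
    induction m with
    | zero => intro A _; simpa using huniv
    | succ m ih =>
      intro A hA
      have he : (⋂ i, A i) = A 0 ∩ ⋂ i : Fin m, A i.succ := by
        ext x
        simp only [Set.mem_iInter, Set.mem_inter_iff]
        constructor
        · intro h; exact ⟨h 0, fun i => h i.succ⟩
        · rintro ⟨h0, hs⟩ i; exact Fin.cases h0 hs i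
      rw [he]
      exact hinter _ (hA 0) _ (ih _ fun i => hA i.succ)
  have hg_open : ∀ V : Set (Fin n → ℝ), IsOpen V → g ⁻¹' V ∈ f := by
    intro V hV
    set D : (Fin n → ℚ × ℚ) → Set (Fin n → ℝ) :=
      fun p => Set.pi Set.univ fun i => Set.Ioo ((p i).1 : ℝ) ((p i).2 : ℝ) with hD
    have hDf : ∀ p, g ⁻¹' D p ∈ f := by
      intro p
      have he : g ⁻¹' D p = ⋂ i, X i ⁻¹' Set.Ioo ((p i).1 : ℝ) ((p i).2 : ℝ) := by
        ext ω
        simp [hD, hg, Set.mem_pi]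
      rw [he]
      exact hInter n _ fun i => hX i _ isOpen_Ioo
    have hcover : ∀ x ∈ V, ∃ p, x ∈ D p ∧ D p ⊆ V := by
      intro x hx
      obtain ⟨ε, hε, hball⟩ := Metric.isOpen_iff.1 hV x hx
      have hq : ∀ i : Fin n, ∃ q : ℚ × ℚ, (q.1 : ℝ) < x i ∧ x i < q.2 ∧
          Set.Ioo (q.1 : ℝ) (q.2 : ℝ) ⊆ Metric.ball (x i) ε := by
        intro i
        obtain ⟨a, ha1, ha2⟩ := exists_rat_btwn (show x i - ε < x i by linarith)
        obtain ⟨b, hb1, hb2⟩ := exists_rat_btwn (show x i < x i + ε by linarith)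
        refine ⟨(a, b), ha2, hb1, ?_⟩
        rw [Real.ball_eq_Ioo]
        exact Set.Ioo_subset_Ioo (le_of_lt ha1) (le_of_lt hb2)
      choose q hq1 hq2 hq3 using hq
      refine ⟨q, fun i _ => ⟨hq1 i, hq2 i⟩, fun y hy => hball ?_⟩
      rw [ball_pi _ hε]
      intro i _
      exact hq3 i (hy i (Set.mem_univ i))
    obtain ⟨e, he⟩ := exists_surjective_nat (Fin n → ℚ × ℚ)
    have hU : ∀ k : ℕ, (if D (e k) ⊆ V then g ⁻¹' D (e k) else ∅) ∈ f := by
      intro k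
      split
      · exact hDf _
      · exact hempty
    have hunion' := hunion _ hU
    have he2 : (⋃ k, (if D (e k) ⊆ V then g ⁻¹' D (e k) else ∅)) = g ⁻¹' V := by
      ext ω
      simp only [Set.mem_iUnion, Set.mem_preimage]
      constructor
      · rintro ⟨k, hk⟩
        split at hk
        · exact ‹D (e k) ⊆ V› hk
        · exact absurd hk (Set.notMem_empty ω)
      · intro hω
        obtain ⟨p, hp1, hp2⟩ := hcover (g ω) hω
        obtain ⟨k, rfl⟩ := he p
        exact ⟨k, by rw [if_pos hp2]; exact hp1⟩
    rwa [he2] at hunion'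
  intro U hU
  obtain ⟨V, hVopen, hVeq⟩ := (continuousOn_iff'.1 hφ) U hU
  have key : (fun ω => φ fun i => X i ω) ⁻¹' U = g ⁻¹' V := by
    ext ω
    have hmem : g ω ∈ Set.range fun ω => fun i => X i ω := ⟨ω, rfl⟩
    constructor
    · intro h
      have : g ω ∈ φ ⁻¹' U ∩ Set.range fun ω => fun i => X i ω := ⟨h, hmem⟩
      rw [hVeq] at this
      exact this.1
    · intro h
      have : g ω ∈ V ∩ Set.range fun ω => fun i => X i ω := ⟨h, hmem⟩
      rw [← hVeq] at this
      exact this.1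
  rw [key]
  exact hg_open V hVopen
end
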